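/- arXiv:2208.11528 — 2 statements merged into one kernel-verified Lean document; each statement's English description precedes it below -/
import Mathlib

section
/- Let f be an excursion and ε > 0. Then d_T[f] = d_T[f − Jf] = d_cl[f − Jf], where d_cl is the classical tree pseudo-distance; d_L[f] = d_L[Jf]; and for all s,t ∈ [0,1], d_L[J^ε f](s,t) = ∑_{r ∈ [0,1], Δ_r(f) ≥ ε} δ_r(x_r^s(f), x_r^t(f)), where δ_r is taken with respect to f. -/
open Set Filter Topology
open scoped Classical

noncomputable section

/-- Left limit of `f` at `t`, with the convention `f(0−) = 0`. -/
def lm (f : ℝ → ℝ) (t : ℝ) : ℝ := if t = 0 then 0 else Function.leftLim f t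

/-- The jump `Δ_t(f) = f t − f(t−)`. -/
def jump (f : ℝ → ℝ) (t : ℝ) : ℝ := f t - lm f t

/-- `inf_{[s,t]} f`. -/
def infIcc (f : ℝ → ℝ) (s t : ℝ) : ℝ := sInf (f '' Icc s t)

/-- An excursion: a càdlàg function on `[0,1]`, nonnegative, vanishing at `1` (and
extended by `0` outside `[0,1]`), all of whose jumps are nonnegative. -/
structure IsExcursion (f : ℝ → ℝ) : Prop where
  nonneg : ∀ t ∈ Icc (0:ℝ) 1, 0 ≤ f t
  zero_outside : ∀ t, t ∉ Icc (0:ℝ) 1 → f t = 0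
  rightCont : ∀ t ∈ Ico (0:ℝ) 1, Tendsto f (𝓝[>] t) (𝓝 (f t))
  leftLimEx : ∀ t ∈ Ioc (0:ℝ) 1, Tendsto f (𝓝[<] t) (𝓝 (Function.leftLim f t))
  one : f 1 = 0
  jump_nonneg : ∀ t ∈ Icc (0:ℝ) 1, 0 ≤ jump f t

/-- The genealogical relation `s ⪯_f t` : `s ≤ t` and `f(s−) ≤ inf_{[s,t]} f`. -/
def pre (f : ℝ → ℝ) (s t : ℝ) : Prop := s ≤ t ∧ lm f s ≤ infIcc f s t

/-- `x_s^t(f) = 1_{s ≤ t} · max(inf_{[s,t]} f − f(s−), 0)`. -/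
def xst (f : ℝ → ℝ) (s t : ℝ) : ℝ := if s ≤ t then max (infIcc f s t - lm f s) 0 else 0

/-- The most recent common ancestor `s ∧_f t`. -/
def mrca (f : ℝ → ℝ) (s t : ℝ) : ℝ := sSup {r : ℝ | 0 ≤ r ∧ pre f r s ∧ pre f r t}

/-- `δ_t(a,b) = min(|a−b|, Δ_t(f) − |a−b|)`, the circle pseudo-distance on `[0, Δ_t(f)]`. -/
def cdel (f : ℝ → ℝ) (t a b : ℝ) : ℝ := min |a - b| (jump f t - |a - b|)

/-- `d_O(s,t) = ∑_{s ≺_f r ⪯_f t} δ_r(0, x_r^t)`. -/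
def dO (f : ℝ → ℝ) (s t : ℝ) : ℝ :=
  ∑' r : ℝ, if pre f s r ∧ s < r ∧ pre f r t then cdel f r 0 (xst f r t) else 0

/-- `d_T(s,t) = f t − inf_{[s,t]} f − ∑_{s ≺_f r ⪯_f t} x_r^t`, intended for `s ⪯_f t`. -/
def dTanc (f : ℝ → ℝ) (s t : ℝ) : ℝ :=
  f t - infIcc f s t - ∑' r : ℝ, if pre f s r ∧ s < r ∧ pre f r t then xst f r t else 0

/-- The looptree pseudo-distance `d_L[f]`. -/
def dL (f : ℝ → ℝ) (s t : ℝ) : ℝ :=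
  cdel f (mrca f s t) (xst f (mrca f s t) s) (xst f (mrca f s t) t)
    + dO f (mrca f s t) s + dO f (mrca f s t) t

/-- The tree pseudo-distance `d_T[f]`. -/
def dT (f : ℝ → ℝ) (s t : ℝ) : ℝ := dTanc f (mrca f s t) s + dTanc f (mrca f s t) t

/-- The vernation pseudo-distance `d_V[f] = d_T[f] + 2·d_L[f]`. -/
def dV (f : ℝ → ℝ) (s t : ℝ) : ℝ := dT f s t + 2 * dL f s t

/-- `Jf(t) = ∑_{r ⪯_f t} x_r^t(f)`. -/
def Jop (f : ℝ → ℝ) (t : ℝ) : ℝ := ∑' r : ℝ, if pre f r t then xst f r t else 0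

/-- `J^ε f(t) = ∑_{r ⪯_f t, Δ_r(f) ≥ ε} x_r^t(f)`. -/
def Jeps (f : ℝ → ℝ) (ε : ℝ) (t : ℝ) : ℝ :=
  ∑' r : ℝ, if pre f r t ∧ ε ≤ jump f r then xst f r t else 0

/-- Pure jump growth (PJG) excursion: `f(t) = ∑_{r ⪯_f t} x_r^t(f)` on `[0,1]`. -/
def IsPJG (f : ℝ → ℝ) : Prop := ∀ t ∈ Icc (0:ℝ) 1, f t = Jop f t

/-- An increasing bijection from `[0,1]` onto itself. -/
def IncBij (l : ℝ → ℝ) : Prop :=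
  StrictMonoOn l (Icc (0:ℝ) 1) ∧ Set.BijOn l (Icc (0:ℝ) 1) (Icc (0:ℝ) 1)

/-- The Skorokhod distance `ρ` on functions `[0,1] → ℝ`. -/
def skor (f g : ℝ → ℝ) : ℝ :=
  sInf {c : ℝ | 0 ≤ c ∧ ∃ l : ℝ → ℝ, IncBij l ∧
    ∀ x ∈ Icc (0:ℝ) 1, |l x - x| ≤ c ∧ |f x - g (l x)| ≤ c}

/-- The classical tree pseudo-distance `d_cl[g](s,t) = g s + g t − 2·inf_{[s∧t, s∨t]} g`. -/
def dcl (g : ℝ → ℝ) (s t : ℝ) : ℝ := g s + g t - 2 * infIcc g (min s t) (max s t)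


/-!
Write `G = f - Jf`. Splitting the sum defining `Jf` at an ancestor `m ⪯_f s` gives
`Jf(s) - Jf(m) = x_m^s - Δ_m(f) + ∑_{m < r} x_r^s`, i.e. `d_T(m, s) = G(s) - G(m)`.
So `G` increases along ancestral lines, and on `[s, t]` its minimum is `G(s ∧_f t)`, attained
at the first ancestor of `t` after `s`; this is `d_T[f] = d_cl[G]`.

For a set `P` of jump times, `J^P f = ∑_{r ⪯_f ·, r ∈ P} x_r^·(f)` is again an excursion,
with `Δ_r(J^P f) = 1_P(r) Δ_r(f)` and `x_r^t(J^P f) = 1_P(r) x_r^t(f)`. Its one-sided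
continuity comes from `x_r^a ≤ x_r^b + x_r^a((f - c)⁺)` for `a ≤ b`, `c = inf_{[a,b]} f`,
and `J((f - c)⁺) ≤ (f - c)⁺`. Since `d_L[g](s, t) = ∑_r δ_r(x_r^s, x_r^t)` for every
excursion `g`, the claims on `d_L` follow. Finally `G` is an excursion without jumps,
so `JG = 0` and `d_T[G] = d_cl[G] = d_T[f]`.
-/

variable {f g : ℝ → ℝ} {a b c e m r r' s s' t t' u v w : ℝ}

theorem le_infIcc (hst : s ≤ t) (h : ∀ u ∈ Icc s t, c ≤ f u) : c ≤ infIcc f s t :=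
  le_csInf ((nonempty_Icc.2 hst).image f) (by rintro _ ⟨u, hu, rfl⟩; exact h u hu)

theorem infIcc_self (f : ℝ → ℝ) (t : ℝ) : infIcc f t t = f t := by
  simp [infIcc]

theorem exists_lt_of_infIcc_lt (hst : s ≤ t) (h : infIcc f s t < c) :
    ∃ u ∈ Icc s t, f u < c := by
  obtain ⟨_, ⟨u, hu, rfl⟩, hlt⟩ := exists_lt_of_csInf_lt ((nonempty_Icc.2 hst).image f) h
  exact ⟨u, hu, hlt⟩

theorem lm_eq_of_tendsto {L : ℝ} (ht : t ≠ 0) (h : Tendsto f (𝓝[<] t) (𝓝 L)) :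
    lm f t = L := by
  rw [lm, if_neg ht, leftLim_eq_of_tendsto h]

theorem lm_eq_zero_of_not_mem (hg : ∀ u ∉ Icc (0:ℝ) 1, g u = 0) (ht : t ∉ Icc (0:ℝ) 1) :
    lm g t = 0 := by
  have hne : t ≠ 0 := by rintro rfl; exact ht ⟨le_rfl, zero_le_one⟩
  refine lm_eq_of_tendsto hne (tendsto_const_nhds.congr' ?_)
  rcases not_and_or.1 ht with h | h
  · filter_upwards [self_mem_nhdsWithin] with u hu
    exact (hg u fun h' => h ((h'.1.trans (le_of_lt hu)))).symm
  · filter_upwards [Ioo_mem_nhdsLT (not_le.1 h)] with u hu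
    exact (hg u fun h' => (hu.1.trans_le h'.2).false).symm

namespace IsExcursion

theorem apply_nonneg (hf : IsExcursion f) (t : ℝ) : 0 ≤ f t := by
  by_cases h : t ∈ Icc (0:ℝ) 1
  · exact hf.nonneg t h
  · rw [hf.zero_outside t h]

theorem apply_of_neg (hf : IsExcursion f) (ht : t < 0) : f t = 0 :=
  hf.zero_outside t fun h => (h.1.trans_lt ht).false

theorem bddBelow_image (hf : IsExcursion f) (s t : ℝ) : BddBelow (f '' Icc s t) :=
  ⟨0, by rintro _ ⟨u, -, rfl⟩; exact hf.apply_nonneg u⟩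

theorem infIcc_le (hf : IsExcursion f) (hu : u ∈ Icc s t) : infIcc f s t ≤ f u :=
  csInf_le (hf.bddBelow_image s t) ⟨u, hu, rfl⟩

theorem infIcc_nonneg (hf : IsExcursion f) (s t : ℝ) : 0 ≤ infIcc f s t := by
  rcases le_or_gt s t with h | h
  · exact le_infIcc h fun u _ => hf.apply_nonneg u
  · simp [infIcc, Icc_eq_empty_of_lt h, Real.sInf_empty]

theorem infIcc_anti (hf : IsExcursion f) (hs : s' ≤ s) (ht : t ≤ t') (hst : s ≤ t) :
    infIcc f s' t' ≤ infIcc f s t :=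
  csInf_le_csInf (hf.bddBelow_image s' t') ((nonempty_Icc.2 hst).image f)
    (image_mono (Icc_subset_Icc hs ht))

theorem infIcc_eq_min (hf : IsExcursion f) (hab : a ≤ b) (hbc : b ≤ c) :
    infIcc f a c = min (infIcc f a b) (infIcc f b c) := by
  rw [infIcc, ← Icc_union_Icc_eq_Icc hab hbc, image_union,
    csInf_union (hf.bddBelow_image a b) ((nonempty_Icc.2 hab).image f)
      (hf.bddBelow_image b c) ((nonempty_Icc.2 hbc).image f)]
  rfl

theorem tendsto_lm (hf : IsExcursion f) (h0 : 0 < t) (h1 : t ≤ 1) :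
    Tendsto f (𝓝[<] t) (𝓝 (lm f t)) := by
  rw [lm, if_neg h0.ne']
  exact hf.leftLimEx t ⟨h0, h1⟩

theorem lm_eq_zero (hf : IsExcursion f) (ht : t ∉ Icc (0:ℝ) 1) : lm f t = 0 :=
  lm_eq_zero_of_not_mem hf.zero_outside ht

theorem lm_nonneg (hf : IsExcursion f) (t : ℝ) : 0 ≤ lm f t := by
  by_cases h : t ∈ Icc (0:ℝ) 1
  · rcases h.1.eq_or_lt with rfl | h0
    · simp [lm]
    · exact ge_of_tendsto (hf.tendsto_lm h0 h.2) (Eventually.of_forall hf.apply_nonneg)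
  · rw [hf.lm_eq_zero h]

theorem lm_le (hf : IsExcursion f) (t : ℝ) : lm f t ≤ f t := by
  by_cases h : t ∈ Icc (0:ℝ) 1
  · have := hf.jump_nonneg t h
    rw [jump] at this
    linarith
  · rw [hf.lm_eq_zero h, hf.zero_outside t h]

theorem jump_nonneg' (hf : IsExcursion f) (t : ℝ) : 0 ≤ jump f t :=
  sub_nonneg.2 (hf.lm_le t)

theorem jump_eq_zero (hf : IsExcursion f) (ht : t ∉ Icc (0:ℝ) 1) : jump f t = 0 := by
  rw [jump, hf.lm_eq_zero ht, hf.zero_outside t ht, sub_zero]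

theorem infIcc_le_lm (hf : IsExcursion f) (hac : a < c) (hc : c ≤ 1) :
    infIcc f a c ≤ lm f c := by
  rcases le_or_gt c 0 with h0 | h0
  · have hc : c ∉ Icc (0:ℝ) 1 ∨ c = 0 := by
      rcases h0.lt_or_eq with h | h
      · exact Or.inl fun h' => (h'.1.trans_lt h).false
      · exact Or.inr h
    have : lm f c = 0 := by
      rcases hc with h | rfl
      · exact hf.lm_eq_zero h
      · simp [lm]
    rw [this, ← hf.apply_of_neg (hac.trans_le h0)]
    exact hf.infIcc_le ⟨le_rfl, hac.le⟩
  · exact ge_of_tendsto (hf.tendsto_lm h0 hc)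
      (eventually_of_mem (Ioo_mem_nhdsLT hac) fun u hu => hf.infIcc_le ⟨hu.1.le, hu.2.le⟩)

theorem tendsto_lm_nhdsLT (hf : IsExcursion f) (h0 : 0 < t) (h1 : t ≤ 1) :
    Tendsto (lm f) (𝓝[<] t) (𝓝 (lm f t)) := by
  refine Metric.nhds_basis_closedBall.tendsto_right_iff.2 fun ε hε => ?_
  obtain ⟨l, hl, hsub⟩ := mem_nhdsLT_iff_exists_Ioo_subset.1
    ((hf.tendsto_lm h0 h1).eventually (Metric.closedBall_mem_nhds _ hε))
  filter_upwards [Ioo_mem_nhdsLT (max_lt hl h0)] with v hv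
  have hv0 : 0 < v := (le_max_right _ _).trans_lt hv.1
  refine Metric.isClosed_closedBall.mem_of_tendsto (hf.tendsto_lm hv0 (hv.2.le.trans h1)) ?_
  filter_upwards [Ioo_mem_nhdsLT hv.1] with x hx
  exact hsub ⟨(le_max_left _ _).trans_lt hx.1, hx.2.trans hv.2⟩

theorem lm_sSup_le (hf : IsExcursion f) {S : Set ℝ} (hne : S.Nonempty) (hbdd : BddAbove S)
    (h0 : 0 < sSup S) (h1 : sSup S ≤ 1) (h : ∀ u ∈ S, lm f u ≤ e) :
    lm f (sSup S) ≤ e := by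
  by_contra! hlt
  obtain ⟨l, hl, hsub⟩ := mem_nhdsLT_iff_exists_Ioo_subset.1
    ((hf.tendsto_lm_nhdsLT h0 h1).eventually (lt_mem_nhds hlt))
  obtain ⟨u, hu, hlu⟩ := exists_lt_of_lt_csSup hne hl
  rcases (le_csSup hbdd hu).eq_or_lt with heq | hlt'
  · exact (h u hu).not_gt (heq ▸ hlt)
  · exact (h u hu).not_gt (hsub ⟨hlu, hlt'⟩)

theorem tendsto_infIcc_nhdsGT (hf : IsExcursion f) (hu : u ∈ Ico (0:ℝ) 1) :
    Tendsto (fun w => infIcc f u w) (𝓝[>] u) (𝓝 (f u)) := by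
  refine tendsto_order.2 ⟨fun a ha => ?_, fun b hb => ?_⟩
  · obtain ⟨a', ha', ha'u⟩ := exists_between ha
    obtain ⟨l, hl, hsub⟩ := mem_nhdsGT_iff_exists_Ioo_subset.1
      ((hf.rightCont u hu).eventually (lt_mem_nhds ha'u))
    filter_upwards [Ioo_mem_nhdsGT hl] with w hw
    refine ha'.trans_le (le_infIcc hw.1.le fun v hv => ?_)
    rcases hv.1.eq_or_lt with rfl | h
    · exact ha'u.le
    · exact (hsub ⟨h, hv.2.trans_lt hw.2⟩).le
  · filter_upwards [self_mem_nhdsWithin] with w hw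
    exact (hf.infIcc_le ⟨le_rfl, le_of_lt hw⟩).trans_lt hb

theorem tendsto_infIcc_nhdsLT (hf : IsExcursion f) (h0 : 0 < u) (h1 : u ≤ 1) :
    Tendsto (fun w => infIcc f w u) (𝓝[<] u) (𝓝 (lm f u)) := by
  refine tendsto_order.2 ⟨fun a ha => ?_, fun b hb => ?_⟩
  · obtain ⟨a', ha', ha'u⟩ := exists_between ha
    obtain ⟨l, hl, hsub⟩ := mem_nhdsLT_iff_exists_Ioo_subset.1
      ((hf.tendsto_lm h0 h1).eventually (lt_mem_nhds ha'u))
    filter_upwards [Ioo_mem_nhdsLT hl] with w hw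
    refine ha'.trans_le (le_infIcc hw.2.le fun v hv => ?_)
    rcases hv.2.eq_or_lt with rfl | h
    · exact ha'u.le.trans (hf.lm_le v)
    · exact (hsub ⟨hw.1.trans_le hv.1, h⟩).le
  · filter_upwards [self_mem_nhdsWithin] with w hw
    exact (hf.infIcc_le_lm hw h1).trans_lt hb

end IsExcursion

theorem pre_refl (hf : IsExcursion f) (t : ℝ) : pre f t t :=
  ⟨le_rfl, by rw [infIcc_self]; exact hf.lm_le t⟩

theorem pre_zero (hf : IsExcursion f) (ht : 0 ≤ t) : pre f 0 t :=
  ⟨ht, by rw [lm, if_pos rfl]; exact hf.infIcc_nonneg 0 t⟩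

theorem pre.mono_right (hf : IsExcursion f) (h : pre f r t) (hru : r ≤ u) (hut : u ≤ t) :
    pre f r u :=
  ⟨hru, h.2.trans (hf.infIcc_anti le_rfl hut hru)⟩

theorem pre.pre_of_pre (hf : IsExcursion f) (h : pre f r t) (h' : pre f r' t) (hrr' : r ≤ r') :
    pre f r r' :=
  h.mono_right hf hrr' h'.1

theorem pre.trans (hf : IsExcursion f) (hrs : pre f r s) (hst : pre f s t) (hs1 : s ≤ 1) :
    pre f r t := by
  rcases hrs.1.eq_or_lt with rfl | hlt
  · exact hst
  · refine ⟨hrs.1.trans hst.1, ?_⟩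
    rw [hf.infIcc_eq_min hrs.1 hst.1]
    exact le_min hrs.2 (hrs.2.trans ((hf.infIcc_le_lm hlt hs1).trans hst.2))

theorem xst_nonneg (f : ℝ → ℝ) (r t : ℝ) : 0 ≤ xst f r t := by
  unfold xst; split_ifs
  · exact le_max_right _ _
  · exact le_rfl

theorem xst_of_pre (h : pre f r t) : xst f r t = infIcc f r t - lm f r := by
  rw [xst, if_pos h.1, max_eq_left (sub_nonneg.2 h.2)]

theorem xst_of_lt (h : t < r) : xst f r t = 0 := by
  rw [xst, if_neg h.not_ge]

theorem xst_eq_zero_of_not_pre (h : ¬ pre f r t) : xst f r t = 0 := by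
  by_cases hrt : r ≤ t
  · rw [xst, if_pos hrt, max_eq_right (sub_nonpos.2 (not_le.1 fun h' => h ⟨hrt, h'⟩).le)]
  · exact xst_of_lt (not_le.1 hrt)

theorem ite_pre_xst (f : ℝ → ℝ) (r t : ℝ) :
    (if pre f r t then xst f r t else 0) = xst f r t := by
  split_ifs with h
  · rfl
  · exact (xst_eq_zero_of_not_pre h).symm

theorem xst_eq_zero_of_left (hf : IsExcursion f) (hr : f r = 0) : xst f r t = 0 := by
  unfold xst; split_ifs with h
  · refine max_eq_right (sub_nonpos.2 ?_)
    exact ((hf.infIcc_le ⟨le_rfl, h⟩).trans_eq hr).trans (hf.lm_nonneg r)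
  · rfl

theorem xst_eq_zero_of_right (hf : IsExcursion f) (ht : f t = 0) : xst f r t = 0 := by
  unfold xst; split_ifs with h
  · refine max_eq_right (sub_nonpos.2 ?_)
    exact ((hf.infIcc_le ⟨h, le_rfl⟩).trans_eq ht).trans (hf.lm_nonneg r)
  · rfl

theorem xst_le_jump (hf : IsExcursion f) (r t : ℝ) : xst f r t ≤ jump f r := by
  unfold xst; split_ifs with h
  · exact max_le (sub_le_sub_right (hf.infIcc_le ⟨le_rfl, h⟩) _) (hf.jump_nonneg' r)
  · exact hf.jump_nonneg' r

theorem xst_self (hf : IsExcursion f) (r : ℝ) : xst f r r = jump f r := by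
  rw [xst_of_pre (pre_refl hf r), infIcc_self, jump]

theorem xst_anti (hf : IsExcursion f) (hra : r ≤ a) (hab : a ≤ b) :
    xst f r b ≤ xst f r a := by
  rw [xst, xst, if_pos (hra.trans hab), if_pos hra]
  exact max_le_max (sub_le_sub_right (hf.infIcc_anti le_rfl hab hra) _) le_rfl

theorem xst_eq_of_pre (hf : IsExcursion f) (hrm : r < m) (hm1 : m ≤ 1) (hms : pre f m s) :
    xst f r s = xst f r m := by
  rw [xst, xst, if_pos (hrm.le.trans hms.1), if_pos hrm.le, hf.infIcc_eq_min hrm.le hms.1,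
    min_eq_left ((hf.infIcc_le_lm hrm hm1).trans hms.2)]

theorem pre_sSup (hf : IsExcursion f) {A : Set ℝ} (hne : A.Nonempty) (hs1 : s ≤ 1)
    (hA : ∀ r ∈ A, 0 ≤ r ∧ pre f r s) : pre f (sSup A) s := by
  have hbdd : BddAbove A := ⟨s, fun r hr => (hA r hr).2.1⟩
  have hms : sSup A ≤ s := csSup_le hne fun r hr => (hA r hr).2.1
  obtain ⟨r₀, hr₀⟩ := hne
  rcases ((hA r₀ hr₀).1.trans (le_csSup hbdd hr₀)).eq_or_lt with h0 | h0
  · rw [← h0]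
    exact pre_zero hf ((hA r₀ hr₀).1.trans ((le_csSup hbdd hr₀).trans hms))
  refine ⟨hms, hf.lm_sSup_le ⟨r₀, hr₀⟩ hbdd h0 (hms.trans hs1) fun r hr => ?_⟩
  exact (hA r hr).2.2.trans (hf.infIcc_anti (le_csSup hbdd hr) le_rfl hms)

theorem le_mrca (h0 : 0 ≤ r) (hs : pre f r s) (ht : pre f r t) : r ≤ mrca f s t :=
  le_csSup ⟨s, fun _ hr => hr.2.1.1⟩ ⟨h0, hs, ht⟩

theorem mrca_nonneg (hf : IsExcursion f) (hs : 0 ≤ s) (ht : 0 ≤ t) : 0 ≤ mrca f s t :=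
  le_mrca le_rfl (pre_zero hf hs) (pre_zero hf ht)

theorem pre_mrca_left (hf : IsExcursion f) (hs : s ∈ Icc (0:ℝ) 1) (ht : 0 ≤ t) :
    pre f (mrca f s t) s :=
  pre_sSup hf ⟨0, le_rfl, pre_zero hf hs.1, pre_zero hf ht⟩ hs.2 fun _ hr => ⟨hr.1, hr.2.1⟩

theorem mrca_comm (f : ℝ → ℝ) (s t : ℝ) : mrca f s t = mrca f t s := by
  simp only [mrca, and_comm (a := pre f _ s)]

theorem pre_mrca_right (hf : IsExcursion f) (hs : 0 ≤ s) (ht : t ∈ Icc (0:ℝ) 1) :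
    pre f (mrca f s t) t :=
  mrca_comm f t s ▸ pre_mrca_left hf ht hs

theorem mrca_mem_Icc (hf : IsExcursion f) (hs : s ∈ Icc (0:ℝ) 1) (ht : 0 ≤ t) :
    mrca f s t ∈ Icc (0:ℝ) 1 :=
  ⟨mrca_nonneg hf hs.1 ht, (pre_mrca_left hf hs ht).1.trans hs.2⟩

theorem sum_xst_add_infIcc_le (hf : IsExcursion f) (hb : b ≤ 1) (R : Finset ℝ) :
    ∀ v ≤ b, (∀ r ∈ R, v < r) → ∑ r ∈ R, xst f r b + infIcc f v b ≤ f b := by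
  induction R using Finset.induction_on_min with
  | empty => exact fun v hvb _ => by simpa using hf.infIcc_le ⟨hvb, le_rfl⟩
  | insert a S haS ih =>
    intro v hvb hR
    have hva : v < a := hR a (Finset.mem_insert_self a S)
    rw [Finset.sum_insert fun h => (haS a h).false]
    by_cases hab : pre f a b
    · have := ih a hab.1 haS
      have := hf.infIcc_anti le_rfl hab.1 hva.le
      have := hf.infIcc_le_lm hva (hab.1.trans hb)
      rw [xst_of_pre hab]
      linarith
    · rw [xst_eq_zero_of_not_pre hab, zero_add]
      exact ih v hvb fun r hr => hva.trans (haS r hr)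

theorem sum_xst_le (hf : IsExcursion f) (hb : b ≤ 1) (R : Finset ℝ) :
    ∑ r ∈ R, xst f r b ≤ f b := by
  set v := min (-1) b
  have hv : v < 0 := (min_le_left _ _).trans_lt (by norm_num)
  rw [← Finset.sum_filter_of_ne (p := fun r => v < r) fun r _ h => ?_]
  · have := sum_xst_add_infIcc_le hf hb (R.filter (v < ·)) v (min_le_right _ _)
      fun r hr => (Finset.mem_filter.1 hr).2
    linarith [hf.infIcc_nonneg v b]
  · by_contra hvr
    exact h (xst_eq_zero_of_left hf (hf.apply_of_neg ((not_lt.1 hvr).trans_lt hv)))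

theorem summable_xst (hf : IsExcursion f) (hb : b ≤ 1) : Summable fun r => xst f r b :=
  summable_of_sum_le (xst_nonneg f · b) (sum_xst_le hf hb)

theorem tsum_xst_le (hf : IsExcursion f) (hb : b ≤ 1) : ∑' r, xst f r b ≤ f b :=
  (summable_xst hf hb).tsum_le_of_sum_le (sum_xst_le hf hb)

theorem summable_ite_xst (hf : IsExcursion f) (hb : b ≤ 1) (p : ℝ → Prop) [DecidablePred p] :
    Summable fun r => if p r then xst f r b else 0 :=
  (summable_xst hf hb).of_nonneg_of_le (fun r => by split_ifs <;> simp [xst_nonneg])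
    fun r => by split_ifs <;> simp [xst_nonneg]

theorem tsum_ite_lt_xst_le (hf : IsExcursion f) (hb : b ≤ 1) (hvb : v ≤ b) (p : ℝ → Prop) :
    ∑' r, (if v < r ∧ p r then xst f r b else 0) ≤ f b - infIcc f v b := by
  refine (summable_ite_xst hf hb _).tsum_le_of_sum_le fun R => ?_
  calc ∑ r ∈ R, (if v < r ∧ p r then xst f r b else 0)
      = ∑ r ∈ R.filter (fun r => v < r ∧ p r), xst f r b := (Finset.sum_filter _ _).symm
    _ ≤ f b - infIcc f v b := by
      have := sum_xst_add_infIcc_le hf hb (R.filter fun r => v < r ∧ p r) v hvb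
        fun r hr => (Finset.mem_filter.1 hr).2.1
      linarith

theorem tsum_eq_tsum_lt_add_add_tsum_gt {φ : ℝ → ℝ} (hφ : Summable φ) (a : ℝ) :
    ∑' r, φ r
      = (∑' r, if r < a then φ r else 0) + φ a + ∑' r, if a < r then φ r else 0 := by
  have hsplit : ∀ r, φ r = ((if r < a then φ r else 0) + if r = a then φ a else 0)
      + if a < r then φ r else 0 := by
    intro r
    rcases lt_trichotomy r a with h | rfl | h
    · simp [h, h.ne, h.not_gt]
    · simp
    · simp [h, h.ne', h.not_gt]
  have h₁ : Summable fun r => if r < a then φ r else 0 := hφ.indicator {r | r < a}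
  have h₂ : Summable fun r => if a < r then φ r else 0 := hφ.indicator {r | a < r}
  rw [tsum_congr hsplit, (h₁.add (hasSum_ite_eq a (φ a)).summable).tsum_add h₂,
    h₁.tsum_add (hasSum_ite_eq a (φ a)).summable, tsum_ite_eq]

theorem IsExcursion.lm_max_sub_const (hf : IsExcursion f) (hc : 0 ≤ c) (t : ℝ) :
    lm (fun u => max (f u - c) 0) t = max (lm f t - c) 0 := by
  by_cases ht : t ∈ Icc (0:ℝ) 1
  · rcases ht.1.eq_or_lt with rfl | h0
    · simp [lm, hc]
    · exact lm_eq_of_tendsto h0.ne'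
        (((hf.tendsto_lm h0 ht.2).sub_const c).max (tendsto_const_nhds (x := (0:ℝ))))
  · rw [lm_eq_zero_of_not_mem (fun u hu => by simp [hf.zero_outside u hu, hc]) ht,
      hf.lm_eq_zero ht]
    simp [hc]

theorem IsExcursion.max_sub_const (hf : IsExcursion f) (hc : 0 ≤ c) :
    IsExcursion fun u => max (f u - c) 0 where
  nonneg _ _ := le_max_right _ _
  zero_outside t ht := by simp [hf.zero_outside t ht, hc]
  rightCont t ht := ((hf.rightCont t ht).sub_const c).max (tendsto_const_nhds (x := (0:ℝ)))
  leftLimEx t ht := by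
    have h := ((hf.tendsto_lm ht.1 ht.2).sub_const c).max (tendsto_const_nhds (x := (0:ℝ)))
    rwa [leftLim_eq_of_tendsto h]
  one := by simp [hf.one, hc]
  jump_nonneg t _ := by
    rw [jump, hf.lm_max_sub_const hc]
    exact sub_nonneg.2 (max_le_max (sub_le_sub_right (hf.lm_le t) c) le_rfl)

theorem xst_le_add_xst_max_sub_const (hf : IsExcursion f) (hab : a ≤ b) :
    xst f r a ≤ xst f r b + xst (fun u => max (f u - infIcc f a b) 0) r a := by
  by_cases hra : r ≤ a
  swap
  · rw [xst_of_lt (not_le.1 hra)]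
    exact add_nonneg (xst_nonneg _ _ _) (xst_nonneg _ _ _)
  have hc := hf.infIcc_nonneg a b
  have hT : max (infIcc f r a - infIcc f a b) 0
      ≤ infIcc (fun u => max (f u - infIcc f a b) 0) r a :=
    le_infIcc hra fun v hv => max_le_max (sub_le_sub_right (hf.infIcc_le hv) _) le_rfl
  rw [xst, xst, xst, if_pos hra, if_pos (hra.trans hab), if_pos hra, hf.infIcc_eq_min hra hab,
    hf.lm_max_sub_const hc]
  have key : ∀ I L : ℝ, max (I - L) 0 ≤ max (min I (infIcc f a b) - L) 0
      + max (max (I - infIcc f a b) 0 - max (L - infIcc f a b) 0) 0 := by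
    intro I L
    simp only [max_def, min_def]
    split_ifs <;> linarith
  have := max_le_max (sub_le_sub_right hT (max (lm f r - infIcc f a b) 0)) (le_refl (0:ℝ))
  linarith [key (infIcc f r a) (lm f r)]

/-- `J^P f(t) = ∑_{r ⪯_f t, P r} x_r^t(f)`; the condition `r ⪯_f t` need not be written,
since `x_r^t(f) = 0` for every other `r`. -/
def Jfilter (f : ℝ → ℝ) (P : ℝ → Prop) (t : ℝ) : ℝ :=
  ∑' r, if P r then xst f r t else 0

theorem Jop_eq_Jfilter (f : ℝ → ℝ) : Jop f = Jfilter f fun _ => True := by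
  funext t
  simp only [Jop, Jfilter, ite_pre_xst, if_true]

theorem Jeps_eq_Jfilter (f : ℝ → ℝ) (ε : ℝ) :
    Jeps f ε = Jfilter f (ε ≤ jump f ·) := by
  funext t
  refine tsum_congr fun r => ?_
  by_cases h : pre f r t
  · simp [h]
  · simp [h, xst_eq_zero_of_not_pre h]

section Jfilter

variable {P : ℝ → Prop}

theorem Jfilter_nonneg (f : ℝ → ℝ) (P : ℝ → Prop) (t : ℝ) : 0 ≤ Jfilter f P t :=
  tsum_nonneg fun r => by split_ifs <;> simp [xst_nonneg]

theorem Jfilter_eq_zero (hf : IsExcursion f) (ht : f t = 0) : Jfilter f P t = 0 := by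
  simp [Jfilter, xst_eq_zero_of_right hf ht]

theorem Jfilter_split (hf : IsExcursion f) (hu : u ≤ 1) (a : ℝ) :
    Jfilter f P u = (∑' r, if r < a ∧ P r then xst f r u else 0)
      + (if P a then xst f a u else 0) + ∑' r, if a < r ∧ P r then xst f r u else 0 := by
  rw [Jfilter, tsum_eq_tsum_lt_add_add_tsum_gt (summable_ite_xst hf hu P) a]
  simp only [ite_and]

theorem Jfilter_self (hf : IsExcursion f) (ha : a ≤ 1) :
    Jfilter f P a
      = (∑' r, if r < a ∧ P r then xst f r a else 0) + if P a then jump f a else 0 := by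
  have htail : (∑' r, if a < r ∧ P r then xst f r a else 0) = 0 :=
    (tsum_congr fun r => by split_ifs with h; exacts [xst_of_lt h.1, rfl]).trans tsum_zero
  rw [Jfilter_split hf ha a, xst_self hf, htail, add_zero]

theorem Jfilter_eq_of_pre (hf : IsExcursion f) (hm1 : m ≤ 1) (hs1 : s ≤ 1) (hms : pre f m s) :
    Jfilter f P s = Jfilter f P m + (if P m then xst f m s - jump f m else 0)
      + ∑' r, if m < r ∧ P r then xst f r s else 0 := by
  have hbelow : (∑' r, if r < m ∧ P r then xst f r s else 0)
      = ∑' r, if r < m ∧ P r then xst f r m else 0 :=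
    tsum_congr fun r => by split_ifs with h; exacts [xst_eq_of_pre hf h.1 hm1 hms, rfl]
  rw [Jfilter_split hf hs1 m, Jfilter_self hf hm1, hbelow]
  split_ifs <;> ring

theorem Jfilter_le_of_le (hf : IsExcursion f) (hru : r ≤ u) (hu1 : u ≤ 1) :
    Jfilter f P u ≤ Jfilter f P r + (if P r then xst f r u - jump f r else 0)
      + (f u - infIcc f r u) := by
  have hbelow : (∑' r', if r' < r ∧ P r' then xst f r' u else 0)
      ≤ ∑' r', if r' < r ∧ P r' then xst f r' r else 0 :=
    Summable.tsum_le_tsum (fun r' => by split_ifs with h; exacts [xst_anti hf h.1.le hru, le_rfl])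
      (summable_ite_xst hf hu1 _) (summable_ite_xst hf (hru.trans hu1) _)
  have htail := tsum_ite_lt_xst_le hf hu1 hru P
  rw [Jfilter_split hf hu1 r, Jfilter_self hf (hru.trans hu1)]
  split_ifs <;> linarith

theorem Jfilter_le_tsum_add (hf : IsExcursion f) (hab : a ≤ b) (hb : b ≤ 1) :
    Jfilter f P a
      ≤ (∑' r, if r ≤ a ∧ P r then xst f r b else 0) + (f a - infIcc f a b) := by
  set h := fun u => max (f u - infIcc f a b) 0
  have hh : IsExcursion h := hf.max_sub_const (hf.infIcc_nonneg a b)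
  have hterm : ∀ r, (if P r then xst f r a else 0)
      ≤ (if r ≤ a ∧ P r then xst f r b else 0) + xst h r a := by
    intro r
    by_cases hP : P r
    · by_cases hra : r ≤ a
      · simpa [hP, hra] using xst_le_add_xst_max_sub_const hf hab
      · simp [hP, hra, xst_of_lt (not_le.1 hra)]
    · simp [hP, xst_nonneg]
  have hha : h a = f a - infIcc f a b :=
    max_eq_left (sub_nonneg.2 (hf.infIcc_le ⟨le_rfl, hab⟩))
  calc Jfilter f P a
      ≤ ∑' r, ((if r ≤ a ∧ P r then xst f r b else 0) + xst h r a) :=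
        Summable.tsum_le_tsum hterm (summable_ite_xst hf (hab.trans hb) P)
          ((summable_ite_xst hf hb _).add (summable_xst hh (hab.trans hb)))
    _ = (∑' r, if r ≤ a ∧ P r then xst f r b else 0) + ∑' r, xst h r a :=
        (summable_ite_xst hf hb _).tsum_add (summable_xst hh (hab.trans hb))
    _ ≤ (∑' r, if r ≤ a ∧ P r then xst f r b else 0) + (f a - infIcc f a b) := by
        have := tsum_xst_le hh (hab.trans hb)
        linarith

theorem tendsto_Jfilter_nhdsGT (hf : IsExcursion f) (hu : u ∈ Ico (0:ℝ) 1) :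
    Tendsto (Jfilter f P) (𝓝[>] u) (𝓝 (Jfilter f P u)) := by
  have hinf := hf.tendsto_infIcc_nhdsGT hu
  have hlow : Tendsto (fun w => Jfilter f P u - (f u - infIcc f u w)) (𝓝[>] u)
      (𝓝 (Jfilter f P u)) := by
    simpa using (tendsto_const_nhds (x := Jfilter f P u)).sub
      ((tendsto_const_nhds (x := f u)).sub hinf)
  have hup : Tendsto (fun w => Jfilter f P u + (f w - infIcc f u w)) (𝓝[>] u)
      (𝓝 (Jfilter f P u)) := by
    simpa using tendsto_const_nhds.add ((hf.rightCont u hu).sub hinf)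
  refine tendsto_of_tendsto_of_tendsto_of_le_of_le' hlow hup ?_ ?_
  all_goals filter_upwards [Ioo_mem_nhdsGT hu.2] with w hw
  · have hdrop : (∑' r, if r ≤ u ∧ P r then xst f r w else 0) ≤ Jfilter f P w :=
      Summable.tsum_le_tsum (fun r => by
          by_cases h : r ≤ u ∧ P r
          · simp [h]
          · rw [if_neg h]; split_ifs <;> simp [xst_nonneg])
        (summable_ite_xst hf hw.2.le _) (summable_ite_xst hf hw.2.le P)
    have := Jfilter_le_tsum_add hf (P := P) hw.1.le hw.2.le
    linarith
  · have := Jfilter_le_of_le hf (P := P) hw.1.le hw.2.le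
    have := xst_le_jump hf u w
    split_ifs at * <;> linarith

theorem tendsto_Jfilter_nhdsLT (hf : IsExcursion f) (h0 : 0 < u) (h1 : u ≤ 1) :
    Tendsto (Jfilter f P) (𝓝[<] u) (𝓝 (∑' r, if r < u ∧ P r then xst f r u else 0)) := by
  set D := fun w => ∑' r, if r ≤ w ∧ P r then xst f r u else 0
  have hD : Tendsto D (𝓝[<] u) (𝓝 (∑' r, if r < u ∧ P r then xst f r u else 0)) := by
    refine tendsto_tsum_of_dominated_convergence (summable_xst hf h1) (fun r => ?_)
      (Eventually.of_forall fun w r => ?_)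
    · refine tendsto_const_nhds.congr' ?_
      rcases lt_or_ge r u with hr | hr
      · filter_upwards [Ioo_mem_nhdsLT hr] with w hw
        simp [hr, hw.1.le]
      · filter_upwards [self_mem_nhdsWithin] with w hw
        simp [hr.not_gt, (hw.trans_le hr).not_ge]
    · split_ifs <;> simp [abs_of_nonneg (xst_nonneg f r u), xst_nonneg]
  have hgap := (hf.tendsto_lm h0 h1).sub (hf.tendsto_infIcc_nhdsLT h0 h1)
  rw [sub_self] at hgap
  have hup : Tendsto (fun w => D w + (f w - infIcc f w u)) (𝓝[<] u)
      (𝓝 (∑' r, if r < u ∧ P r then xst f r u else 0)) := by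
    simpa using hD.add hgap
  refine tendsto_of_tendsto_of_tendsto_of_le_of_le' hD hup ?_ ?_
  all_goals filter_upwards [self_mem_nhdsWithin] with w hw
  · refine Summable.tsum_le_tsum (fun r => ?_)
      (summable_ite_xst hf h1 _) (summable_ite_xst hf (le_of_lt hw |>.trans h1) P)
    by_cases h : r ≤ w ∧ P r
    · simpa [h] using xst_anti hf h.1 (le_of_lt hw)
    · rw [if_neg h]; split_ifs <;> simp [xst_nonneg]
  · exact Jfilter_le_tsum_add hf (le_of_lt hw) h1

theorem lm_Jfilter (hf : IsExcursion f) (ht : t ≤ 1) :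
    lm (Jfilter f P) t = ∑' r, if r < t ∧ P r then xst f r t else 0 := by
  rcases le_or_gt t 0 with h0 | h0
  · have hsum : (∑' r, if r < t ∧ P r then xst f r t else 0) = 0 :=
      (tsum_congr fun r => by
        split_ifs with h
        exacts [xst_eq_zero_of_left hf (hf.apply_of_neg (h.1.trans_le h0)), rfl]).trans tsum_zero
    rw [hsum]
    rcases h0.lt_or_eq with h | rfl
    · exact lm_eq_zero_of_not_mem (fun u hu => Jfilter_eq_zero hf (hf.zero_outside u hu))
        fun h' => (h'.1.trans_lt h).false
    · simp [lm]
  · exact lm_eq_of_tendsto h0.ne' (tendsto_Jfilter_nhdsLT hf h0 ht)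

theorem jump_Jfilter (hf : IsExcursion f) (t : ℝ) :
    jump (Jfilter f P) t = if P t then jump f t else 0 := by
  by_cases ht : t ≤ 1
  · rw [jump, lm_Jfilter hf ht, Jfilter_self hf ht]
    ring
  · have ht' : t ∉ Icc (0:ℝ) 1 := fun h => ht h.2
    rw [jump, Jfilter_eq_zero hf (hf.zero_outside t ht'), hf.jump_eq_zero ht',
      lm_eq_zero_of_not_mem (fun u hu => Jfilter_eq_zero hf (hf.zero_outside u hu)) ht']
    simp

theorem isExcursion_Jfilter (hf : IsExcursion f) (P : ℝ → Prop) :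
    IsExcursion (Jfilter f P) where
  nonneg t _ := Jfilter_nonneg f P t
  zero_outside t ht := Jfilter_eq_zero hf (hf.zero_outside t ht)
  rightCont t ht := tendsto_Jfilter_nhdsGT hf ht
  leftLimEx t ht := by
    have h := tendsto_Jfilter_nhdsLT hf (P := P) ht.1 ht.2
    rwa [leftLim_eq_of_tendsto h]
  one := Jfilter_eq_zero hf hf.one
  jump_nonneg t ht := by
    rw [jump_Jfilter hf]
    split_ifs
    exacts [hf.jump_nonneg t ht, le_rfl]

theorem lm_Jfilter_eq (hf : IsExcursion f) (ht : t ≤ 1) :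
    lm (Jfilter f P) t = Jfilter f P t - if P t then jump f t else 0 := by
  rw [lm_Jfilter hf ht, Jfilter_self hf ht, add_sub_cancel_right]

theorem infIcc_Jfilter_le (hf : IsExcursion f) (hrb : r ≤ b) (hb : b ≤ 1) :
    infIcc (Jfilter f P) r b ≤ lm (Jfilter f P) r + if P r then xst f r b else 0 := by
  -- bound `J^P f` at a point `u ∈ [r, b]` where `f` is within `η / 2` of its infimum
  refine le_of_forall_pos_le_add fun η hη => ?_
  obtain ⟨u, hu, hfu⟩ :=
    exists_lt_of_infIcc_lt hrb (lt_add_of_pos_right (infIcc f r b) (half_pos hη))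
  have hJu := (isExcursion_Jfilter hf P).infIcc_le hu
  have hsplit := Jfilter_le_of_le hf (P := P) hu.1 (hu.2.trans hb)
  have hinf := hf.infIcc_anti le_rfl hu.2 hu.1
  have hxst : xst f r u ≤ xst f r b + η / 2 := by
    have := hf.infIcc_le (⟨hu.1, le_rfl⟩ : u ∈ Icc r u)
    rw [xst, xst, if_pos hu.1, if_pos hrb]
    calc max (infIcc f r u - lm f r) 0 ≤ max (infIcc f r b - lm f r + η / 2) 0 :=
          max_le_max (by linarith) le_rfl
      _ ≤ max (infIcc f r b - lm f r) 0 + η / 2 :=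
          max_le (by linarith [le_max_left (infIcc f r b - lm f r) 0])
            (by linarith [le_max_right (infIcc f r b - lm f r) 0])
  rw [lm_Jfilter_eq hf (hrb.trans hb)]
  split_ifs at hsplit ⊢ <;> linarith

theorem le_infIcc_Jfilter (hf : IsExcursion f) (hrb : pre f r b) (hb : b ≤ 1) :
    lm (Jfilter f P) r + (if P r then xst f r b else 0) ≤ infIcc (Jfilter f P) r b := by
  refine le_infIcc hrb.1 fun v hv => ?_
  have hv1 : v ≤ 1 := hv.2.trans hb
  have htail : 0 ≤ ∑' r', if r < r' ∧ P r' then xst f r' v else 0 :=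
    tsum_nonneg fun r' => by split_ifs <;> simp [xst_nonneg]
  have hanti := xst_anti hf hv.1 hv.2
  rw [lm_Jfilter_eq hf (hv.1.trans hv1),
    Jfilter_eq_of_pre hf (hv.1.trans hv1) hv1 (hrb.mono_right hf hv.1 hv.2)]
  split_ifs <;> linarith

theorem xst_Jfilter (hf : IsExcursion f) (hb : b ≤ 1) (r : ℝ) :
    xst (Jfilter f P) r b = if P r then xst f r b else 0 := by
  rcases lt_or_ge b r with hbr | hrb
  · simp [xst_of_lt hbr]
  have hle := infIcc_Jfilter_le hf (P := P) hrb hb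
  rw [xst, if_pos hrb]
  by_cases hp : pre f r b
  · rw [le_antisymm hle (le_infIcc_Jfilter hf hp hb), add_sub_cancel_left]
    split_ifs
    exacts [max_eq_left (xst_nonneg f r b), max_self 0]
  · rw [xst_eq_zero_of_not_pre hp, ite_self, add_zero] at hle
    rw [xst_eq_zero_of_not_pre hp, ite_self]
    exact max_eq_right (sub_nonpos.2 hle)

end Jfilter

theorem cdel_self (hf : IsExcursion f) (r a : ℝ) : cdel f r a a = 0 := by
  rw [cdel, sub_self, abs_zero, sub_zero, min_eq_left (hf.jump_nonneg' r)]

theorem cdel_comm (f : ℝ → ℝ) (r a b : ℝ) : cdel f r a b = cdel f r b a := by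
  rw [cdel, cdel, abs_sub_comm]

theorem summable_cdel (hf : IsExcursion f) (hs : s ≤ 1) (ht : t ≤ 1) :
    Summable fun r => cdel f r (xst f r s) (xst f r t) := by
  refine ((summable_xst hf hs).add (summable_xst hf ht)).of_nonneg_of_le (fun r => ?_)
    fun r => (min_le_left _ _).trans ?_
  · refine le_min (abs_nonneg _) (sub_nonneg.2 ?_)
    exact abs_sub_le_of_nonneg_of_le (xst_nonneg f r s) (xst_le_jump hf r s)
      (xst_nonneg f r t) (xst_le_jump hf r t)
  · exact (abs_sub _ _).trans_eq (by
      rw [abs_of_nonneg (xst_nonneg f r s), abs_of_nonneg (xst_nonneg f r t)])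

theorem ite_pre_lt_pre_eq (hf : IsExcursion f) (hms : pre f m s) (φ : ℝ → ℝ → ℝ)
    (hφ : ∀ r, φ r 0 = 0) (r : ℝ) :
    (if pre f m r ∧ m < r ∧ pre f r s then φ r (xst f r s) else 0)
      = if m < r then φ r (xst f r s) else 0 := by
  by_cases hmr : m < r
  · by_cases hrs : pre f r s
    · rw [if_pos ⟨hms.pre_of_pre hf hrs hmr.le, hmr, hrs⟩, if_pos hmr]
    · rw [if_neg fun h => hrs h.2.2, if_pos hmr, xst_eq_zero_of_not_pre hrs, hφ]
  · rw [if_neg fun h => hmr h.2.1, if_neg hmr]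

theorem dL_eq_tsum (hf : IsExcursion f) (hs : s ∈ Icc (0:ℝ) 1) (ht : t ∈ Icc (0:ℝ) 1) :
    dL f s t = ∑' r, cdel f r (xst f r s) (xst f r t) := by
  set m := mrca f s t
  have hm := mrca_mem_Icc hf hs ht.1
  have hms := pre_mrca_left hf hs ht.1
  have hmt := pre_mrca_right hf hs.1 ht
  have hdO : ∀ {s}, pre f m s →
      dO f m s = ∑' r, if m < r then cdel f r 0 (xst f r s) else 0 :=
    fun hms => tsum_congr (ite_pre_lt_pre_eq hf hms (cdel f · 0) (cdel_self hf · 0))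
  -- below `m` the two arguments of `δ_r` agree; above `m` at least one of them vanishes
  have hbelow : (∑' r, if r < m then cdel f r (xst f r s) (xst f r t) else 0) = 0 := by
    refine (tsum_congr fun r => ?_).trans tsum_zero
    split_ifs with hr
    · rw [xst_eq_of_pre hf hr hm.2 hms, xst_eq_of_pre hf hr hm.2 hmt, cdel_self hf]
    · rfl
  have habove : ∀ r, (if m < r then cdel f r (xst f r s) (xst f r t) else 0)
      = (if m < r then cdel f r 0 (xst f r s) else 0)
        + if m < r then cdel f r 0 (xst f r t) else 0 := by
    intro r
    split_ifs with hr
    · have hnot : ¬ (pre f r s ∧ pre f r t) :=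
        fun h => (le_mrca (hm.1.trans hr.le) h.1 h.2).not_gt hr
      by_cases hrs : pre f r s
      · rw [xst_eq_zero_of_not_pre fun h => hnot ⟨hrs, h⟩, cdel_self hf, add_zero, cdel_comm]
      · rw [xst_eq_zero_of_not_pre hrs, cdel_self hf, zero_add]
    · rw [add_zero]
  have hsum : ∀ {s}, s ≤ 1 →
      Summable fun r => if m < r then cdel f r 0 (xst f r s) else 0 := by
    intro s hs1
    -- `x_r^1 = 0`, so `summable_cdel` with the times `1` and `s` applies
    have h := (summable_cdel hf le_rfl hs1).congr fun r => by rw [xst_eq_zero_of_right hf hf.one]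
    exact h.indicator {r | m < r}
  rw [tsum_eq_tsum_lt_add_add_tsum_gt (summable_cdel hf hs.2 ht.2) m, hbelow, tsum_congr habove,
    (hsum hs.2).tsum_add (hsum ht.2), dL, hdO hms, hdO hmt]
  ring

theorem dL_eq_dL_Jop (hf : IsExcursion f) (hs : s ∈ Icc (0:ℝ) 1) (ht : t ∈ Icc (0:ℝ) 1) :
    dL f s t = dL (Jop f) s t := by
  rw [Jop_eq_Jfilter, dL_eq_tsum hf hs ht, dL_eq_tsum (isExcursion_Jfilter hf _) hs ht]
  refine tsum_congr fun r => ?_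
  simp only [cdel, xst_Jfilter hf hs.2, xst_Jfilter hf ht.2, jump_Jfilter hf, if_true]

theorem dL_Jeps_eq_tsum (hf : IsExcursion f) (ε : ℝ) (hs : s ∈ Icc (0:ℝ) 1)
    (ht : t ∈ Icc (0:ℝ) 1) :
    dL (Jeps f ε) s t = ∑' r : Icc (0:ℝ) 1,
      if ε ≤ jump f r.1 then cdel f r.1 (xst f r.1 s) (xst f r.1 t) else 0 := by
  rw [Jeps_eq_Jfilter, dL_eq_tsum (isExcursion_Jfilter hf _) hs ht, tsum_subtype (Icc (0:ℝ) 1)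
    fun r => if ε ≤ jump f r then cdel f r (xst f r s) (xst f r t) else 0]
  refine tsum_congr fun r => ?_
  simp only [cdel, xst_Jfilter hf hs.2, xst_Jfilter hf ht.2, jump_Jfilter hf, indicator_apply]
  by_cases hr : r ∈ Icc (0:ℝ) 1
  · split_ifs <;> simp
  · have hfr := hf.zero_outside r hr
    simp [hr, xst_eq_zero_of_left hf hfr, hf.jump_eq_zero hr]

theorem tsum_pre_lt_pre_eq (hf : IsExcursion f) (hms : pre f m s) :
    (∑' r, if pre f m r ∧ m < r ∧ pre f r s then xst f r s else 0)
      = ∑' r, if m < r then xst f r s else 0 :=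
  tsum_congr (ite_pre_lt_pre_eq hf hms (fun _ x => x) fun _ => rfl)

theorem dTanc_eq (hf : IsExcursion f) (hm : m ≤ 1) (hs : s ≤ 1) (hms : pre f m s) :
    dTanc f m s = (f s - Jop f s) - (f m - Jop f m) := by
  have hJ := Jfilter_eq_of_pre hf (P := fun _ => True) hm hs hms
  simp only [and_true, if_true] at hJ
  rw [dTanc, tsum_pre_lt_pre_eq hf hms, Jop_eq_Jfilter, hJ, xst_of_pre hms, jump]
  ring

theorem dTanc_nonneg (hf : IsExcursion f) (hs : s ≤ 1) (hms : pre f m s) : 0 ≤ dTanc f m s := by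
  have := tsum_ite_lt_xst_le hf hs hms.1 fun _ => True
  simp only [and_true] at this
  rw [dTanc, tsum_pre_lt_pre_eq hf hms]
  linarith

theorem exists_first_pre (hf : IsExcursion f) (hs : 0 ≤ s) (hst : s ≤ t) (ht : t ≤ 1) :
    ∃ w ∈ Icc s t, pre f w t ∧ ∀ r ∈ Ico s w, ¬ pre f r t := by
  set W := {u | u ∈ Icc s t ∧ pre f u t}
  have hW : t ∈ W := ⟨⟨hst, le_rfl⟩, pre_refl hf t⟩
  have hbdd : BddBelow W := ⟨s, fun u hu => hu.1.1⟩
  have hsw : s ≤ sInf W := le_csInf ⟨t, hW⟩ fun u hu => hu.1.1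
  have hwt : sInf W ≤ t := csInf_le hbdd hW
  refine ⟨sInf W, ⟨hsw, hwt⟩, ?_,
    fun r hr hrt => hr.2.not_ge (csInf_le hbdd ⟨⟨hr.1, hrt.1⟩, hrt⟩)⟩
  by_cases hmem : sInf W ∈ W
  · exact hmem.2
  have hwt' : sInf W < t := hwt.lt_of_ne fun h => hmem (h ▸ hW)
  -- as `u ↓ sInf W` through `W`, `inf_{[sInf W, u]} f → f (sInf W)` by right-continuity, and
  -- `inf_{[u,t]} f ≥ f(u−) ≥ inf_{[sInf W, u]} f`
  refine ⟨hwt, (hf.lm_le _).trans (le_of_forall_pos_le_add fun η hη => ?_)⟩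
  obtain ⟨l, hl, hsub⟩ := mem_nhdsGT_iff_exists_Ioo_subset.1
    ((hf.tendsto_infIcc_nhdsGT ⟨hs.trans hsw, hwt'.trans_le ht⟩).eventually
      (lt_mem_nhds (sub_lt_self (f (sInf W)) hη)))
  obtain ⟨u, hu, hul⟩ := exists_lt_of_csInf_lt ⟨t, hW⟩ hl
  have hwu : sInf W < u := (csInf_le hbdd hu).lt_of_ne fun h => hmem (h ▸ hu)
  have h1 : f (sInf W) - η < infIcc f (sInf W) u := hsub ⟨hwu, hul⟩
  have h2 := hf.infIcc_le_lm hwu (hu.1.2.trans ht)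
  have h3 := le_min h1.le (h1.le.trans (h2.trans hu.2.2))
  rw [← hf.infIcc_eq_min hwu.le hu.1.2] at h3
  linarith

theorem lm_eq_infIcc_of_forall_not_pre (hf : IsExcursion f) (hm : 0 ≤ m) (hmw : m < w)
    (hw : w ≤ 1) (h : ∀ r ∈ Ioo m w, ¬ pre f r w) : lm f w = infIcc f m w := by
  refine le_antisymm ?_ (hf.infIcc_le_lm hmw hw)
  by_contra! hlt
  obtain ⟨e, he1, he2⟩ := exists_between hlt
  -- `sSup S`, the last time at which `f ≤ e`, would be an ancestor of `w` in `(m, w)`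
  set S := {u | u ∈ Icc m w ∧ f u ≤ e}
  obtain ⟨u₀, hu₀, hfu₀⟩ := exists_lt_of_infIcc_lt hmw.le he1
  have hne : S.Nonempty := ⟨u₀, hu₀, hfu₀.le⟩
  have hbdd : BddAbove S := ⟨w, fun u hu => hu.1.2⟩
  have hmu : m ≤ sSup S := hu₀.1.trans (le_csSup hbdd ⟨hu₀, hfu₀.le⟩)
  have huw : sSup S ≤ w := csSup_le hne fun u hu => hu.1.2
  have hafter : ∀ v ∈ Ioc (sSup S) w, e < f v := fun v hv =>
    not_le.1 fun hfv => hv.1.not_ge (le_csSup hbdd ⟨⟨hmu.trans hv.1.le, hv.2⟩, hfv⟩)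
  have hlm : lm f (sSup S) ≤ e := by
    rcases (hm.trans hmu).eq_or_lt with h0 | h0
    · rw [← h0, lm, if_pos rfl]
      exact (hf.infIcc_nonneg m w).trans he1.le
    · exact hf.lm_sSup_le hne hbdd h0 (huw.trans hw) fun u hu => (hf.lm_le u).trans hu.2
  have hpre : pre f (sSup S) w := by
    refine ⟨huw, le_infIcc huw fun v hv => ?_⟩
    rcases hv.1.eq_or_lt with heq | hlt
    · exact heq ▸ hf.lm_le _
    · exact hlm.trans (hafter v ⟨hlt, hv.2⟩).le
  have huw' : sSup S < w := huw.lt_of_ne fun heq => (heq ▸ hlm).not_gt he2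
  have hmu' : m < sSup S := by
    refine hmu.lt_of_ne fun heq => ?_
    have hfm : e ≤ f m := ge_of_tendsto (hf.rightCont m ⟨hm, hmw.trans_le hw⟩)
      (eventually_of_mem (Ioc_mem_nhdsGT_of_mem ⟨le_rfl, hmw⟩)
        fun v hv => (hafter v (heq ▸ hv)).le)
    have : e ≤ infIcc f m w := le_infIcc hmw.le fun v hv => by
      rcases hv.1.eq_or_lt with heq' | hlt
      · exact heq' ▸ hfm
      · exact (hafter v ⟨heq ▸ hlt, hv.2⟩).le
    linarith
  exact h _ ⟨hmu', huw'⟩ hpre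

theorem Jop_le (hf : IsExcursion f) (ht : t ≤ 1) : Jop f t ≤ f t := by
  simpa only [Jop, ite_pre_xst] using tsum_xst_le hf ht

theorem isExcursion_Jop (hf : IsExcursion f) : IsExcursion (Jop f) :=
  Jop_eq_Jfilter f ▸ isExcursion_Jfilter hf _

theorem jump_Jop (hf : IsExcursion f) (t : ℝ) : jump (Jop f) t = jump f t := by
  simpa only [← Jop_eq_Jfilter, if_true] using jump_Jfilter hf (P := fun _ => True) t

theorem lm_sub (hf : IsExcursion f) (hg : IsExcursion g) (t : ℝ) :
    lm (fun u => f u - g u) t = lm f t - lm g t := by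
  by_cases ht : t ∈ Icc (0:ℝ) 1
  · rcases ht.1.eq_or_lt with rfl | h0
    · simp [lm]
    · exact lm_eq_of_tendsto h0.ne' ((hf.tendsto_lm h0 ht.2).sub (hg.tendsto_lm h0 ht.2))
  · have hvanish : ∀ u ∉ Icc (0:ℝ) 1, f u - g u = 0 := fun u hu => by
      rw [hf.zero_outside u hu, hg.zero_outside u hu, sub_zero]
    rw [lm_eq_zero_of_not_mem hvanish ht, hf.lm_eq_zero ht, hg.lm_eq_zero ht, sub_zero]

theorem jump_sub_Jop (hf : IsExcursion f) (t : ℝ) : jump (fun u => f u - Jop f u) t = 0 := by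
  have := jump_Jop hf t
  rw [jump, lm_sub hf (isExcursion_Jop hf)]
  rw [jump, jump] at this
  linarith

theorem isExcursion_sub_Jop (hf : IsExcursion f) : IsExcursion fun u => f u - Jop f u where
  nonneg t ht := sub_nonneg.2 (Jop_le hf ht.2)
  zero_outside t ht := by simp [hf.zero_outside t ht, (isExcursion_Jop hf).zero_outside t ht]
  rightCont t ht := (hf.rightCont t ht).sub ((isExcursion_Jop hf).rightCont t ht)
  leftLimEx t ht := by
    have h := (hf.tendsto_lm ht.1 ht.2).sub ((isExcursion_Jop hf).tendsto_lm ht.1 ht.2)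
    rwa [leftLim_eq_of_tendsto h]
  one := by simp [hf.one, (isExcursion_Jop hf).one]
  jump_nonneg t _ := (jump_sub_Jop hf t).ge

theorem Jop_eq_zero_of_jump_eq_zero (hg : IsExcursion g) (h : ∀ t, jump g t = 0) :
    Jop g = fun _ => 0 := by
  funext t
  simp only [Jop, ite_pre_xst]
  exact (tsum_congr fun r =>
    le_antisymm ((xst_le_jump hg r t).trans_eq (h r)) (xst_nonneg g r t)).trans tsum_zero

theorem sub_Jop_le_of_pre (hf : IsExcursion f) (hm : m ≤ 1) (hs : s ≤ 1) (hms : pre f m s) :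
    f m - Jop f m ≤ f s - Jop f s := by
  linarith [dTanc_eq hf hm hs hms, dTanc_nonneg hf hs hms]

theorem sub_Jop_eq_of_forall_not_pre (hf : IsExcursion f) (hm : 0 ≤ m) (hmw : m < w)
    (hw : w ≤ 1) (hpre : pre f m w) (h : ∀ r ∈ Ioo m w, ¬ pre f r w) :
    f w - Jop f w = f m - Jop f m := by
  have htail : (∑' r, if m < r then xst f r w else 0) = jump f w := by
    rw [tsum_eq_single w fun r hrw => ?_, if_pos hmw, xst_self hf]
    split_ifs with hmr
    · rcases lt_or_gt_of_ne hrw with hrw' | hrw'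
      · exact xst_eq_zero_of_not_pre (h r ⟨hmr, hrw'⟩)
      · exact xst_of_lt hrw'
    · rfl
  have := dTanc_eq hf (hmw.le.trans hw) hw hpre
  rw [dTanc, tsum_pre_lt_pre_eq hf hpre, htail, jump,
    ← lm_eq_infIcc_of_forall_not_pre hf hm hmw hw h] at this
  linarith

theorem infIcc_sub_Jop (hf : IsExcursion f) (hs : s ∈ Icc (0:ℝ) 1) (ht : t ∈ Icc (0:ℝ) 1)
    (hst : s ≤ t) :
    infIcc (fun u => f u - Jop f u) s t = f (mrca f s t) - Jop f (mrca f s t) := by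
  set m := mrca f s t
  have hm := mrca_mem_Icc hf hs ht.1
  have hms := pre_mrca_left hf hs ht.1
  have hmt := pre_mrca_right hf hs.1 ht
  have hle : ∀ u ∈ Icc s t, f m - Jop f m ≤ f u - Jop f u := fun u hu =>
    sub_Jop_le_of_pre hf hm.2 (hu.2.trans ht.2) (hmt.mono_right hf (hms.1.trans hu.1) hu.2)
  obtain ⟨w, hw, hwt, hfirst⟩ := exists_first_pre hf hs.1 hst ht.2
  have hGw : f w - Jop f w = f m - Jop f m := by
    rcases (hms.1.trans hw.1).eq_or_lt with heq | hmw
    · rw [← heq]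
    refine sub_Jop_eq_of_forall_not_pre hf hm.1 hmw (hw.2.trans ht.2)
      (hmt.mono_right hf hmw.le hw.2) fun r hr hrw => ?_
    -- an ancestor of `w` in `(m, w)` would be a common ancestor of `s` and `t` (if `r < s`)
    -- or contradict the choice of `w` (if `s ≤ r`)
    have hrt := hrw.trans hf hwt (hw.2.trans ht.2)
    rcases lt_or_ge r s with hrs | hrs
    · exact (le_mrca (hm.1.trans hr.1.le) (hrt.mono_right hf hrs.le hst) hrt).not_gt hr.1
    · exact hfirst r ⟨hrs, hr.2⟩ hrt
  refine le_antisymm ?_ (le_infIcc hst hle)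
  calc infIcc (fun u => f u - Jop f u) s t ≤ f w - Jop f w :=
        (isExcursion_sub_Jop hf).infIcc_le hw
    _ = f m - Jop f m := hGw

theorem dT_comm (f : ℝ → ℝ) (s t : ℝ) : dT f s t = dT f t s := by
  rw [dT, dT, mrca_comm, add_comm]

theorem dcl_comm (g : ℝ → ℝ) (s t : ℝ) : dcl g s t = dcl g t s := by
  rw [dcl, dcl, min_comm, max_comm, add_comm (g s)]

theorem dT_eq_dcl (hf : IsExcursion f) (hs : s ∈ Icc (0:ℝ) 1) (ht : t ∈ Icc (0:ℝ) 1) :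
    dT f s t = dcl (fun u => f u - Jop f u) s t := by
  wlog hst : s ≤ t generalizing s t
  · rw [dT_comm, dcl_comm]
    exact this ht hs (le_of_not_ge hst)
  have hm := mrca_mem_Icc hf hs ht.1
  rw [dT, dTanc_eq hf hm.2 hs.2 (pre_mrca_left hf hs ht.1),
    dTanc_eq hf hm.2 ht.2 (pre_mrca_right hf hs.1 ht), dcl, min_eq_left hst, max_eq_right hst,
    infIcc_sub_Jop hf hs ht hst]
  ring

theorem dT_eq_dT_sub_Jop (hf : IsExcursion f) (hs : s ∈ Icc (0:ℝ) 1)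
    (ht : t ∈ Icc (0:ℝ) 1) :
    dT f s t = dT (fun u => f u - Jop f u) s t := by
  have hG := isExcursion_sub_Jop hf
  rw [dT_eq_dcl hG hs ht, Jop_eq_zero_of_jump_eq_zero hG (jump_sub_Jop hf), dT_eq_dcl hf hs ht]
  simp only [sub_zero]

theorem statement12_general (f : ℝ → ℝ) (hf : IsExcursion f) (ε : ℝ) :
    (∀ s ∈ Icc (0:ℝ) 1, ∀ t ∈ Icc (0:ℝ) 1,
        dT f s t = dT (fun u => f u - Jop f u) s t ∧
        dT f s t = dcl (fun u => f u - Jop f u) s t ∧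
        dL f s t = dL (Jop f) s t) ∧
    (∀ s ∈ Icc (0:ℝ) 1, ∀ t ∈ Icc (0:ℝ) 1,
        dL (Jeps f ε) s t =
          ∑' r : Icc (0:ℝ) 1,
            if ε ≤ jump f r.1 then cdel f r.1 (xst f r.1 s) (xst f r.1 t) else 0) :=
  ⟨fun _ hs _ ht => ⟨dT_eq_dT_sub_Jop hf hs ht, dT_eq_dcl hf hs ht, dL_eq_dL_Jop hf hs ht⟩,
    fun _ hs _ ht => dL_Jeps_eq_tsum hf ε hs ht⟩

theorem statement12 (f : ℝ → ℝ) (hf : IsExcursion f) (ε : ℝ) (hε : 0 < ε) :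
    (∀ s ∈ Icc (0:ℝ) 1, ∀ t ∈ Icc (0:ℝ) 1,
        dT f s t = dT (fun u => f u - Jop f u) s t ∧
        dT f s t = dcl (fun u => f u - Jop f u) s t ∧
        dL f s t = dL (Jop f) s t) ∧
    (∀ s ∈ Icc (0:ℝ) 1, ∀ t ∈ Icc (0:ℝ) 1,
        dL (Jeps f ε) s t =
          ∑' r : Icc (0:ℝ) 1,
            if ε ≤ jump f r.1 then cdel f r.1 (xst f r.1 s) (xst f r.1 t) else 0) :=
  statement12_general f hf ε
end
end

section
/- Let (X,d) be a compact geodesic metric space. The following are equivalent: (i) X is a vernation tree; (ii) for all x,y ∈ X with x ≠ y there exist u,v ∈ X∖{x,y} such that x and y lie in different connected components of X∖{u,v}; (iii) for all x,y ∈ X with x ≠ y there exist u,v ∈ X∖{x,y} such that x and y lie in different connected components of X∖{u,v} and 2·min(d(x,u), d(x,v), d(y,u), d(y,v)) ≥ d(x,y). -/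
open Set

noncomputable section

/-- A geodesic metric space: any two points are joined by a geodesic. -/
def IsGeodesicSpace (X : Type*) [MetricSpace X] : Prop :=
  ∀ x y : X, ∃ γ : ℝ → X, γ 0 = x ∧ γ 1 = y ∧
    ∀ s ∈ Icc (0:ℝ) 1, ∀ t ∈ Icc (0:ℝ) 1, dist (γ s) (γ t) = |s - t| * dist x y

/-- A loop on `X` based at `x`: a continuous map on `[0,1]`, injective on `[0,1)`,
with `γ 0 = γ 1 = x`. -/
def IsLoop {X : Type*} [MetricSpace X] (γ : ℝ → X) (x : X) : Prop :=
  ContinuousOn γ (Icc 0 1) ∧ InjOn γ (Ico 0 1) ∧ γ 0 = x ∧ γ 1 = x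

/-- A vernation tree: a geodesic space in which two loops based at the same point
have equal images or images meeting only at the base point. -/
def IsVernationTree (X : Type*) [MetricSpace X] : Prop :=
  IsGeodesicSpace X ∧
    ∀ (x : X) (γ₁ γ₂ : ℝ → X), IsLoop γ₁ x → IsLoop γ₂ x →
      γ₁ '' Icc 0 1 = γ₂ '' Icc 0 1 ∨ γ₁ '' Icc 0 1 ∩ γ₂ '' Icc 0 1 = {x}



/-!
(i) ⇒ (iii). Let `m` be the midpoint of a geodesic `g` from `x` to `y`. If `m` alone does not
separate `x` from `y`, an arc `α` from `x` to `y` avoiding `m` closes up with a piece of `g` to a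
loop `J` through `m`, and the part of `J` on `α` contains a point `v` equidistant from `x` and `y`;
`v` is not on `g`, whose only such point is `m`. Then `{m, v}` separates `x` from `y`: an arc
avoiding both would give a second loop through `m` that shares a piece of `g` with `J`, hence has
the image of `J` by the vernation property, yet misses `v`. Every point `w` equidistant from `x` and
`y` satisfies `d(x, y) ≤ 2 d(x, w)`, which is the distance bound.

(ii) ⇒ (i). If two loops at `x` share a point other than `x` but have different images, an
excursion of one loop away from the other is a chord joining two distinct points `q`, `r` of the
other loop. With the two arcs of that loop it forms three paths from `q` to `r` meeting only at
`q` and `r`, and two points cannot block all three.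

Arcs come from connectedness because in a geodesic space "joined by an arc inside the open set `U`"
is an equivalence relation on `U` with open classes.
-/

section Curves

variable {X : Type*}

def subcurve (f : ℝ → X) (c d : ℝ) : ℝ → X := f ∘ AffineMap.lineMap c d

def concatCurve (f g : ℝ → X) : ℝ → X := fun t => if t ≤ 1 / 2 then f (2 * t) else g (2 * t - 1)

@[simp]
lemma subcurve_zero (f : ℝ → X) (c d : ℝ) : subcurve f c d 0 = f c := by
  simp [subcurve]

@[simp]
lemma subcurve_one (f : ℝ → X) (c d : ℝ) : subcurve f c d 1 = f d := by
  simp [subcurve]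

lemma image_subcurve (f : ℝ → X) (c d : ℝ) : subcurve f c d '' Icc 0 1 = f '' uIcc c d := by
  rw [subcurve, image_comp, ← segment_eq_image_lineMap, segment_eq_uIcc]

lemma mapsTo_lineMap_uIcc (c d : ℝ) : MapsTo (AffineMap.lineMap c d) (Icc (0 : ℝ) 1) (uIcc c d) :=
  fun t ht => by
    rw [← segment_eq_uIcc, segment_eq_image_lineMap]
    exact mem_image_of_mem _ ht

lemma continuousOn_subcurve [TopologicalSpace X] {f : ℝ → X} {s : Set ℝ}
    (hf : ContinuousOn f s) {c d : ℝ} (hcd : uIcc c d ⊆ s) :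
    ContinuousOn (subcurve f c d) (Icc 0 1) :=
  hf.comp AffineMap.lineMap_continuous.continuousOn ((mapsTo_lineMap_uIcc c d).mono_right hcd)

lemma injOn_subcurve {f : ℝ → X} {s : Set ℝ} (hf : InjOn f s) {c d : ℝ} (hcd : uIcc c d ⊆ s)
    (hne : c ≠ d) : InjOn (subcurve f c d) (Icc 0 1) :=
  hf.comp (AffineMap.lineMap_injective ℝ hne).injOn ((mapsTo_lineMap_uIcc c d).mono_right hcd)

@[simp]
lemma concatCurve_zero (f g : ℝ → X) : concatCurve f g 0 = f 0 := by
  norm_num [concatCurve]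

@[simp]
lemma concatCurve_one (f g : ℝ → X) : concatCurve f g 1 = g 1 := by
  norm_num [concatCurve]

lemma eqOn_concatCurve_left (f g : ℝ → X) :
    EqOn (concatCurve f g) (fun t => f (2 * t)) (Icc 0 (1 / 2)) :=
  fun _ ht => if_pos ht.2

lemma eqOn_concatCurve_right {f g : ℝ → X} (h : f 1 = g 0) :
    EqOn (concatCurve f g) (fun t => g (2 * t - 1)) (Icc (1 / 2) 1) := by
  intro t ht
  rcases ht.1.eq_or_lt with rfl | hlt
  · norm_num [concatCurve, h]
  · exact if_neg (not_le.mpr hlt)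

lemma image_two_mul_Icc : (fun t : ℝ => 2 * t) '' Icc 0 (1 / 2) = Icc 0 1 := by
  rw [image_mul_left_Icc (by norm_num) (by norm_num)]
  norm_num

lemma image_two_mul_sub_one_Icc : (fun t : ℝ => 2 * t - 1) '' Icc (1 / 2) 1 = Icc 0 1 := by
  simp_rw [sub_eq_add_neg]
  rw [image_affine_Icc' (by norm_num)]
  norm_num

lemma Icc_union_Icc_eq_Icc_half : Icc (0 : ℝ) (1 / 2) ∪ Icc (1 / 2) 1 = Icc 0 1 :=
  Icc_union_Icc_eq_Icc (by norm_num) (by norm_num)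

lemma image_concatCurve {f g : ℝ → X} (h : f 1 = g 0) :
    concatCurve f g '' Icc 0 1 = f '' Icc 0 1 ∪ g '' Icc 0 1 := by
  have hf : (fun t => f (2 * t)) '' Icc 0 (1 / 2) = f '' Icc 0 1 := by
    rw [← image_two_mul_Icc, image_image]
  have hg : (fun t => g (2 * t - 1)) '' Icc (1 / 2) 1 = g '' Icc 0 1 := by
    rw [← image_two_mul_sub_one_Icc, image_image]
  rw [← hf, ← hg, ← (eqOn_concatCurve_left f g).image_eq, ← (eqOn_concatCurve_right h).image_eq,
    ← image_union, Icc_union_Icc_eq_Icc_half]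

lemma continuousOn_concatCurve [TopologicalSpace X] {f g : ℝ → X}
    (hf : ContinuousOn f (Icc 0 1)) (hg : ContinuousOn g (Icc 0 1)) (h : f 1 = g 0) :
    ContinuousOn (concatCurve f g) (Icc 0 1) := by
  have hl : ContinuousOn (concatCurve f g) (Icc 0 (1 / 2)) := by
    refine ContinuousOn.congr ?_ (eqOn_concatCurve_left f g)
    exact hf.comp (by fun_prop) (mapsTo_iff_image_subset.mpr image_two_mul_Icc.subset)
  have hr : ContinuousOn (concatCurve f g) (Icc (1 / 2) 1) := by
    refine ContinuousOn.congr ?_ (eqOn_concatCurve_right h)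
    exact hg.comp (by fun_prop) (mapsTo_iff_image_subset.mpr image_two_mul_sub_one_Icc.subset)
  rw [← Icc_union_Icc_eq_Icc_half]
  exact hl.union_of_isClosed hr isClosed_Icc isClosed_Icc

lemma injOn_concatCurve {f g : ℝ → X} {s : Set ℝ} (hs : s ⊆ Ioc (1 / 2) 1)
    (hf : InjOn f (Icc 0 1)) (hg : InjOn g (Icc 0 1)) (hfg : f 1 = g 0)
    (hcross : ∀ t ∈ s, g (2 * t - 1) ∉ f '' Icc 0 1) :
    InjOn (concatCurve f g) (Icc 0 (1 / 2) ∪ s) := by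
  have hsI : s ⊆ Icc (1 / 2) 1 := hs.trans Ioc_subset_Icc_self
  have hgs : ∀ t ∈ s, 2 * t - 1 ∈ Icc (0 : ℝ) 1 := fun t ht =>
    ⟨by linarith [(hsI ht).1], by linarith [(hsI ht).2]⟩
  have hfI : ∀ t ∈ Icc (0 : ℝ) (1 / 2), 2 * t ∈ Icc (0 : ℝ) 1 := fun t ht =>
    ⟨by linarith [ht.1], by linarith [ht.2]⟩
  have hdisj : Disjoint (Icc (0 : ℝ) (1 / 2)) s :=
    disjoint_left.mpr fun t ht hts => (hs hts).1.not_ge ht.2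
  rw [injOn_union hdisj]
  refine ⟨?_, ?_, ?_⟩
  · refine InjOn.congr (fun a ha b hb hab => ?_) (eqOn_concatCurve_left f g).symm
    linarith [hf (hfI a ha) (hfI b hb) hab]
  · refine InjOn.congr (fun a ha b hb hab => ?_) ((eqOn_concatCurve_right hfg).mono hsI).symm
    linarith [hg (hgs a ha) (hgs b hb) hab]
  · intro a ha b hb hab
    rw [eqOn_concatCurve_left f g ha, eqOn_concatCurve_right hfg (hsI hb)] at hab
    exact hcross b hb ⟨2 * a, hfI a ha, hab⟩

end Curves

section Excursions

variable {X : Type*} [TopologicalSpace X]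

lemma exists_last_mem {f : ℝ → X} {c d : ℝ} (hf : ContinuousOn f (Icc c d)) {C : Set X}
    (hC : IsClosed C) (hcd : c ≤ d) (hc : f c ∈ C) :
    ∃ t ∈ Icc c d, f t ∈ C ∧ ∀ s ∈ Ioc t d, f s ∉ C := by
  have hK : IsCompact (Icc c d ∩ f ⁻¹' C) := isCompact_Icc.of_isClosed_subset
    (hf.preimage_isClosed_of_isClosed isClosed_Icc hC) inter_subset_left
  obtain ⟨t, ⟨htI, htC⟩, hmax⟩ := hK.exists_isGreatest ⟨c, left_mem_Icc.mpr hcd, hc⟩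
  exact ⟨t, htI, htC, fun s hs hsC => hs.1.not_ge (hmax ⟨⟨htI.1.trans hs.1.le, hs.2⟩, hsC⟩)⟩

lemma exists_first_mem {f : ℝ → X} {c d : ℝ} (hf : ContinuousOn f (Icc c d)) {C : Set X}
    (hC : IsClosed C) (hcd : c ≤ d) (hd : f d ∈ C) :
    ∃ t ∈ Icc c d, f t ∈ C ∧ ∀ s ∈ Ico c t, f s ∉ C := by
  have hK : IsCompact (Icc c d ∩ f ⁻¹' C) := isCompact_Icc.of_isClosed_subset
    (hf.preimage_isClosed_of_isClosed isClosed_Icc hC) inter_subset_left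
  obtain ⟨t, ⟨htI, htC⟩, hmin⟩ := hK.exists_isLeast ⟨d, right_mem_Icc.mpr hcd, hd⟩
  exact ⟨t, htI, htC, fun s hs hsC => hs.2.not_ge (hmin ⟨⟨hs.1, hs.2.le.trans htI.2⟩, hsC⟩)⟩

lemma exists_excursion {γ : ℝ → X} (hγ : ContinuousOn γ (Icc 0 1)) {C : Set X} (hC : IsClosed C)
    (h0 : γ 0 ∈ C) (h1 : γ 1 ∈ C) {c : ℝ} (hc : c ∈ Icc (0 : ℝ) 1) (hcC : γ c ∉ C) :
    ∃ a b, 0 ≤ a ∧ a < c ∧ c < b ∧ b ≤ 1 ∧ γ a ∈ C ∧ γ b ∈ C ∧ ∀ t ∈ Ioo a b, γ t ∉ C := by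
  obtain ⟨a, ha, haC, ha_last⟩ :=
    exists_last_mem (hγ.mono (Icc_subset_Icc_right hc.2)) hC hc.1 h0
  obtain ⟨b, hb, hbC, hb_first⟩ :=
    exists_first_mem (hγ.mono (Icc_subset_Icc_left hc.1)) hC hc.2 h1
  have hac : a < c := ha.2.lt_of_ne fun h => hcC (h ▸ haC)
  have hcb : c < b := hb.1.lt_of_ne fun h => hcC (h ▸ hbC)
  refine ⟨a, b, ha.1, hac, hcb, hb.2, haC, hbC, fun t ht => ?_⟩
  rcases le_total t c with htc | hct
  · exact ha_last t ⟨ht.1, htc⟩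
  · exact hb_first t ⟨hct, ht.2⟩

end Excursions

section Arcs

variable {X : Type*} [TopologicalSpace X]

structure IsArc (γ : ℝ → X) (x y : X) : Prop where
  continuousOn : ContinuousOn γ (Icc 0 1)
  injOn : InjOn γ (Icc 0 1)
  source : γ 0 = x
  target : γ 1 = y

namespace IsArc

variable {γ f g : ℝ → X} {x y z : X}

lemma source_mem_image (hγ : IsArc γ x y) : x ∈ γ '' Icc 0 1 :=
  ⟨0, left_mem_Icc.mpr zero_le_one, hγ.source⟩

lemma target_mem_image (hγ : IsArc γ x y) : y ∈ γ '' Icc 0 1 :=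
  ⟨1, right_mem_Icc.mpr zero_le_one, hγ.target⟩

lemma source_ne_target (hγ : IsArc γ x y) : x ≠ y := fun h =>
  zero_ne_one (hγ.injOn (left_mem_Icc.mpr zero_le_one) (right_mem_Icc.mpr zero_le_one)
    (by rw [hγ.source, hγ.target, h]))

lemma isCompact_image (hγ : IsArc γ x y) : IsCompact (γ '' Icc 0 1) :=
  isCompact_Icc.image_of_continuousOn hγ.continuousOn

lemma subarc (hγ : IsArc γ x y) {c d : ℝ} (hc : c ∈ Icc (0 : ℝ) 1) (hd : d ∈ Icc (0 : ℝ) 1)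
    (hcd : c ≠ d) : IsArc (subcurve γ c d) (γ c) (γ d) :=
  ⟨continuousOn_subcurve hγ.continuousOn (uIcc_subset_Icc hc hd),
    injOn_subcurve hγ.injOn (uIcc_subset_Icc hc hd) hcd, subcurve_zero γ c d, subcurve_one γ c d⟩

lemma symm (hγ : IsArc γ x y) : IsArc (subcurve γ 1 0) y x := by
  simpa only [hγ.source, hγ.target] using
    hγ.subarc (right_mem_Icc.mpr zero_le_one) (left_mem_Icc.mpr zero_le_one) one_ne_zero

lemma concat (hf : IsArc f x y) (hg : IsArc g y z)
    (h : f '' Icc 0 1 ∩ g '' Icc 0 1 ⊆ {y}) : IsArc (concatCurve f g) x z := by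
  have hfg : f 1 = g 0 := hf.target.trans hg.source.symm
  refine ⟨continuousOn_concatCurve hf.continuousOn hg.continuousOn hfg, ?_,
    by simp [hf.source], by simp [hg.target]⟩
  rw [← Icc_union_Ioc_eq_Icc (by norm_num : (0 : ℝ) ≤ 1 / 2) (by norm_num : (1 / 2 : ℝ) ≤ 1)]
  refine injOn_concatCurve subset_rfl hf.injOn hg.injOn hfg fun t ht hft => ?_
  have ht' : 2 * t - 1 ∈ Icc (0 : ℝ) 1 := ⟨by linarith [ht.1], by linarith [ht.2]⟩
  have hgt : g (2 * t - 1) = g 0 := (h ⟨hft, 2 * t - 1, ht', rfl⟩).trans hg.source.symm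
  linarith [ht.1, hg.injOn ht' (left_mem_Icc.mpr zero_le_one) hgt]

end IsArc

def ArcJoinedIn (U : Set X) (x y : X) : Prop :=
  x = y ∨ ∃ γ, IsArc γ x y ∧ γ '' Icc 0 1 ⊆ U

lemma ArcJoinedIn.symm {U : Set X} {x y : X} (h : ArcJoinedIn U x y) : ArcJoinedIn U y x := by
  rcases h with rfl | ⟨γ, hγ, hγU⟩
  · exact Or.inl rfl
  · refine Or.inr ⟨subcurve γ 1 0, hγ.symm, ?_⟩
    rwa [image_subcurve, uIcc_comm, uIcc_of_le zero_le_one]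

/-- Cut the first arc at the last point where the second arc meets it. -/
lemma ArcJoinedIn.trans [T2Space X] {U : Set X} {x y z : X} (hxy : ArcJoinedIn U x y)
    (hyz : ArcJoinedIn U y z) : ArcJoinedIn U x z := by
  rcases hxy with rfl | ⟨A, hA, hAU⟩
  · exact hyz
  rcases hyz with rfl | ⟨γ, hγ, hγU⟩
  · exact Or.inr ⟨A, hA, hAU⟩
  obtain ⟨t₀, ht₀, ⟨σ, hσ, hAσ⟩, hlast⟩ := exists_last_mem hγ.continuousOn
    hA.isCompact_image.isClosed zero_le_one (hγ.source ▸ hA.target_mem_image)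
  have hAU' : A '' uIcc 0 σ ⊆ U :=
    (image_mono (uIcc_subset_Icc (left_mem_Icc.mpr zero_le_one) hσ)).trans hAU
  have hγU' : γ '' uIcc t₀ 1 ⊆ U :=
    (image_mono (uIcc_subset_Icc ht₀ (right_mem_Icc.mpr zero_le_one))).trans hγU
  have hA' := hA.subarc (left_mem_Icc.mpr zero_le_one) hσ
  have hγ' := hγ.subarc ht₀ (right_mem_Icc.mpr zero_le_one)
  rw [hA.source, hAσ] at hA'
  rw [hγ.target] at hγ'
  rcases eq_or_ne σ 0 with rfl | hσ0
  · rw [hA.source] at hAσ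
    rcases eq_or_ne t₀ 1 with rfl | ht₁
    · exact Or.inl (hAσ.trans hγ.target)
    · exact Or.inr ⟨_, hAσ ▸ hγ' ht₁, by rwa [image_subcurve]⟩
  rcases eq_or_ne t₀ 1 with rfl | ht₁
  · exact Or.inr ⟨_, hγ.target ▸ hA' hσ0.symm, by rwa [image_subcurve]⟩
  refine Or.inr ⟨_, (hA' hσ0.symm).concat (hγ' ht₁) ?_, ?_⟩
  · rw [image_subcurve, image_subcurve, uIcc_of_le ht₀.2]
    rintro _ ⟨⟨s, hs, rfl⟩, t, ht, hts⟩
    rcases ht.1.eq_or_lt with rfl | hlt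
    · exact hts.symm
    · exact absurd ⟨s, uIcc_subset_Icc (left_mem_Icc.mpr zero_le_one) hσ hs, hts.symm⟩
        (hlast t ⟨hlt, ht.2⟩)
  · rw [image_concatCurve (by simpa using hAσ), image_subcurve, image_subcurve]
    exact union_subset hAU' hγU'

end Arcs

section Loops

variable {X : Type*} [MetricSpace X]

lemma IsArc.isLoop_concat {f g : ℝ → X} {x y : X} (hf : IsArc f x y)
    (hg : IsArc g y x) (h : f '' Icc 0 1 ∩ g '' Icc 0 1 ⊆ {x, y}) :
    IsLoop (concatCurve f g) x := by
  have hfg : f 1 = g 0 := hf.target.trans hg.source.symm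
  refine ⟨continuousOn_concatCurve hf.continuousOn hg.continuousOn hfg, ?_,
    by simp [hf.source], by simp [hg.target]⟩
  rw [← Icc_union_Ioo_eq_Ico (by norm_num : (0 : ℝ) ≤ 1 / 2) (by norm_num : (1 / 2 : ℝ) < 1)]
  refine injOn_concatCurve Ioo_subset_Ioc_self hf.injOn hg.injOn hfg fun t ht hft => ?_
  have ht' : 2 * t - 1 ∈ Icc (0 : ℝ) 1 := ⟨by linarith [ht.1], by linarith [ht.2]⟩
  rcases h ⟨hft, 2 * t - 1, ht', rfl⟩ with hx | hy
  · linarith [ht.2, hg.injOn ht' (right_mem_Icc.mpr zero_le_one) (hx.trans hg.target.symm)]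
  · linarith [ht.1, hg.injOn ht' (left_mem_Icc.mpr zero_le_one) (hy.trans hg.source.symm)]

/-- Follow `g` from `g c` until it first meets `α`, return along `α`, and close up along `g`. -/
lemma IsArc.exists_isLoop_of_apply_notMem {g α : ℝ → X} {x y : X} (hg : IsArc g x y)
    (hα : IsArc α x y) {c : ℝ} (hc : c ∈ Icc (0 : ℝ) 1) (hcα : g c ∉ α '' Icc 0 1) :
    ∃ a b, 0 ≤ a ∧ a < c ∧ c < b ∧ b ≤ 1 ∧
      ∃ B ⊆ α '' Icc 0 1, IsPreconnected B ∧ g a ∈ B ∧ g b ∈ B ∧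
        ∃ J, IsLoop J (g c) ∧ J '' Icc 0 1 = g '' Icc a b ∪ B := by
  obtain ⟨a, b, ha0, hac, hcb, hb1, ⟨a', ha', hαa'⟩, ⟨b', hb', hαb'⟩, hout⟩ :=
    exists_excursion hg.continuousOn hα.isCompact_image.isClosed
      (hg.source ▸ hα.source_mem_image) (hg.target ▸ hα.target_mem_image) hc hcα
  have haI : a ∈ Icc (0 : ℝ) 1 := ⟨ha0, hac.le.trans hc.2⟩
  have hbI : b ∈ Icc (0 : ℝ) 1 := ⟨hc.1.trans hcb.le, hb1⟩
  have ha'b' : b' ≠ a' := fun h =>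
    (hac.trans hcb).ne (hg.injOn haI hbI (by rw [← hαa', ← hαb', h]))
  have hB : uIcc b' a' ⊆ Icc 0 1 := uIcc_subset_Icc hb' ha'
  refine ⟨a, b, ha0, hac, hcb, hb1, α '' uIcc b' a', image_mono hB,
    isPreconnected_uIcc.image _ (hα.continuousOn.mono hB),
    hαa' ▸ mem_image_of_mem α right_mem_uIcc, hαb' ▸ mem_image_of_mem α left_mem_uIcc, ?_⟩
  have h₁ := hg.subarc hc hbI hcb.ne
  have h₂ := hα.subarc hb' ha' ha'b'
  have h₃ := hg.subarc haI hc hac.ne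
  rw [hαb', hαa'] at h₂
  have h₁₂ := h₁.concat h₂ (by
    rw [image_subcurve, image_subcurve, uIcc_of_le hcb.le]
    rintro _ ⟨⟨t, ht, rfl⟩, htα⟩
    obtain rfl : t = b := by_contra fun hne =>
      hout t ⟨hac.trans_le ht.1, ht.2.lt_of_ne hne⟩ (image_mono hB htα)
    rfl)
  have himage : concatCurve (subcurve g c b) (subcurve α b' a') '' Icc 0 1 =
      g '' Icc c b ∪ α '' uIcc b' a' := by
    rw [image_concatCurve (by simp [hαb']), image_subcurve, image_subcurve, uIcc_of_le hcb.le]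
  refine ⟨_, h₁₂.isLoop_concat h₃ ?_, ?_⟩
  · rw [himage, image_subcurve, uIcc_of_le hac.le]
    rintro _ ⟨⟨t, ht, rfl⟩ | htα, s, hs, hst⟩
    · have hts : t = s :=
        hg.injOn ⟨hc.1.trans ht.1, ht.2.trans hb1⟩ ⟨ha0.trans hs.1, hs.2.trans hc.2⟩ hst.symm
      exact Or.inl (by rw [hts, le_antisymm hs.2 (hts ▸ ht.1)])
    · obtain rfl : s = a := by_contra fun hne =>
        hout s ⟨hs.1.lt_of_ne (Ne.symm hne), hs.2.trans_lt hcb⟩ (image_mono hB (hst ▸ htα))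
      exact Or.inr hst.symm
  · rw [image_concatCurve (by simp [hαa']), himage, image_subcurve, uIcc_of_le hac.le,
      union_right_comm, ← image_union, union_comm (Icc c b), Icc_union_Icc_eq_Icc hac.le hcb.le]

end Loops

section Geodesics

variable {X : Type*} [MetricSpace X]

def IsGeodesicSegment (γ : ℝ → X) (x y : X) : Prop :=
  γ 0 = x ∧ γ 1 = y ∧
    ∀ s ∈ Icc (0 : ℝ) 1, ∀ t ∈ Icc (0 : ℝ) 1, dist (γ s) (γ t) = |s - t| * dist x y

lemma IsGeodesicSpace.exists_isGeodesicSegment (hgeo : IsGeodesicSpace X) (x y : X) :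
    ∃ γ, IsGeodesicSegment γ x y :=
  hgeo x y

namespace IsGeodesicSegment

variable {γ : ℝ → X} {x y : X} {t : ℝ}

lemma dist_source (hγ : IsGeodesicSegment γ x y) (ht : t ∈ Icc (0 : ℝ) 1) :
    dist x (γ t) = t * dist x y := by
  have h := hγ.2.2 0 (left_mem_Icc.mpr zero_le_one) t ht
  rwa [hγ.1, zero_sub, abs_neg, abs_of_nonneg ht.1] at h

lemma dist_target (hγ : IsGeodesicSegment γ x y) (ht : t ∈ Icc (0 : ℝ) 1) :
    dist y (γ t) = (1 - t) * dist x y := by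
  have h := hγ.2.2 1 (right_mem_Icc.mpr zero_le_one) t ht
  rwa [hγ.2.1, abs_of_nonneg (sub_nonneg.mpr ht.2)] at h

lemma continuousOn (hγ : IsGeodesicSegment γ x y) : ContinuousOn γ (Icc 0 1) :=
  (LipschitzOnWith.of_dist_le_mul (K := nndist x y) fun s hs t ht => by
    rw [hγ.2.2 s hs t ht, coe_nndist, Real.dist_eq, mul_comm]).continuousOn

lemma isArc (hγ : IsGeodesicSegment γ x y) (hxy : x ≠ y) : IsArc γ x y := by
  refine ⟨hγ.continuousOn, fun s hs t ht hst => ?_, hγ.1, hγ.2.1⟩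
  have h := hγ.2.2 s hs t ht
  rw [hst, dist_self, eq_comm, mul_eq_zero, abs_eq_zero, sub_eq_zero] at h
  exact h.resolve_right (dist_ne_zero.mpr hxy)

lemma image_subset_ball (hγ : IsGeodesicSegment γ x y) {r : ℝ} (hr : dist x y < r) :
    γ '' Icc 0 1 ⊆ Metric.ball x r := by
  rintro _ ⟨t, ht, rfl⟩
  rw [Metric.mem_ball, dist_comm, hγ.dist_source ht]
  nlinarith [ht.2, dist_nonneg (x := x) (y := y)]

lemma dist_midpoint (hγ : IsGeodesicSegment γ x y) :
    dist x (γ (1 / 2)) = dist x y / 2 ∧ dist y (γ (1 / 2)) = dist x y / 2 := by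
  have h : (1 / 2 : ℝ) ∈ Icc 0 1 := by norm_num
  rw [hγ.dist_source h, hγ.dist_target h]
  constructor <;> ring

lemma eq_half_of_dist_eq (hγ : IsGeodesicSegment γ x y) (hxy : x ≠ y) (ht : t ∈ Icc (0 : ℝ) 1)
    (h : dist x (γ t) = dist y (γ t)) : t = 1 / 2 := by
  rw [hγ.dist_source ht, hγ.dist_target ht] at h
  have := dist_pos.mpr hxy
  nlinarith

end IsGeodesicSegment

lemma IsGeodesicSpace.arcJoinedIn_of_dist_lt (hgeo : IsGeodesicSpace X) {U : Set X} {w z : X}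
    {r : ℝ} (hball : Metric.ball w r ⊆ U) (hz : dist w z < r) : ArcJoinedIn U w z := by
  rcases eq_or_ne w z with rfl | hwz
  · exact Or.inl rfl
  obtain ⟨γ, hγ⟩ := hgeo.exists_isGeodesicSegment w z
  exact Or.inr ⟨γ, hγ.isArc hwz, (hγ.image_subset_ball hz).trans hball⟩

theorem IsGeodesicSpace.arcJoinedIn_of_mem_connectedComponentIn (hgeo : IsGeodesicSpace X)
    {U : Set X} (hU : IsOpen U) {x y : X} (hy : y ∈ connectedComponentIn U x) :
    ArcJoinedIn U x y := by
  have hx : x ∈ connectedComponentIn U x :=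
    mem_connectedComponentIn (connectedComponentIn_nonempty_iff.mp ⟨y, hy⟩)
  refine isPreconnected_connectedComponentIn.induction₂ (ArcJoinedIn U) (fun w hw => ?_)
    (fun _ _ _ _ _ _ => ArcJoinedIn.trans) (fun _ _ _ _ => ArcJoinedIn.symm) hx hy
  obtain ⟨r, hr, hball⟩ := Metric.isOpen_iff.mp hU w (connectedComponentIn_subset U x hw)
  filter_upwards [nhdsWithin_le_nhds (Metric.ball_mem_nhds w hr)] with z hz
  exact hgeo.arcJoinedIn_of_dist_lt hball (by rwa [Metric.mem_ball, dist_comm] at hz)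

end Geodesics

section VernationToSeparation

variable {X : Type*} [MetricSpace X]

lemma IsVernationTree.image_eq_of_mem (hv : IsVernationTree X) {x p : X} {γ₁ γ₂ : ℝ → X}
    (h₁ : IsLoop γ₁ x) (h₂ : IsLoop γ₂ x) (hp₁ : p ∈ γ₁ '' Icc 0 1) (hp₂ : p ∈ γ₂ '' Icc 0 1)
    (hpx : p ≠ x) : γ₁ '' Icc 0 1 = γ₂ '' Icc 0 1 :=
  (hv.2 x γ₁ γ₂ h₁ h₂).resolve_right fun h => hpx (h.subset ⟨hp₁, hp₂⟩)

/-- If `g c` and `v` did not separate, a second loop through `g c` would share the part of `g`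
near `g c` with `J` but miss `v`. -/
lemma IsVernationTree.notMem_connectedComponentIn_of_isLoop (hv : IsVernationTree X)
    {g : ℝ → X} {x y : X} (hg : IsArc g x y) {a b c : ℝ} (ha : 0 ≤ a) (hac : a < c) (hcb : c < b)
    (hc : c ∈ Icc (0 : ℝ) 1) {J : ℝ → X} (hJ : IsLoop J (g c)) (hgJ : g '' Icc a b ⊆ J '' Icc 0 1)
    {v : X} (hvJ : v ∈ J '' Icc 0 1) (hvg : v ∉ g '' Icc 0 1) :
    y ∉ connectedComponentIn ({g c, v} : Set X)ᶜ x := by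
  intro hy
  rcases hv.1.arcJoinedIn_of_mem_connectedComponentIn (toFinite _).isClosed.isOpen_compl hy with
    hxy | ⟨δ, hδ, hδU⟩
  · exact hg.source_ne_target hxy
  obtain ⟨a₂, b₂, ha₂, ha₂c, hcb₂, hb₂, B₂, hB₂δ, -, -, -, J₂, hJ₂, hJ₂img⟩ :=
    hg.exists_isLoop_of_apply_notMem hδ hc fun h => hδU h (mem_insert _ _)
  have htc : max a a₂ < c := max_lt hac ha₂c
  have ht : max a a₂ ∈ Icc (0 : ℝ) 1 := ⟨ha.trans (le_max_left a a₂), htc.le.trans hc.2⟩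
  have hJJ₂ : J '' Icc 0 1 = J₂ '' Icc 0 1 := by
    refine hv.image_eq_of_mem hJ hJ₂ (hgJ ⟨_, ⟨le_max_left a a₂, (htc.trans hcb).le⟩, rfl⟩) ?_
      fun h => htc.ne (hg.injOn ht hc h)
    rw [hJ₂img]
    exact Or.inl ⟨_, ⟨le_max_right a a₂, (htc.trans hcb₂).le⟩, rfl⟩
  rw [hJJ₂, hJ₂img] at hvJ
  rcases hvJ with ⟨t, ht, rfl⟩ | hvB
  · exact hvg ⟨t, ⟨ha₂.trans ht.1, ht.2.trans hb₂⟩, rfl⟩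
  · exact hδU (hB₂δ hvB) (mem_insert_of_mem _ rfl)

lemma IsVernationTree.exists_dist_eq_notMem_connectedComponentIn (hv : IsVernationTree X)
    {g : ℝ → X} {x y : X} (hg : IsGeodesicSegment g x y) (hxy : x ≠ y) :
    ∃ v, dist x v = dist y v ∧ y ∉ connectedComponentIn ({g (1 / 2), v} : Set X)ᶜ x := by
  have hc : (1 / 2 : ℝ) ∈ Icc 0 1 := by norm_num
  by_cases hm : y ∈ connectedComponentIn ({g (1 / 2)} : Set X)ᶜ x
  swap
  · exact ⟨g (1 / 2), by rw [hg.dist_midpoint.1, hg.dist_midpoint.2], by rwa [pair_eq_singleton]⟩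
  rcases hv.1.arcJoinedIn_of_mem_connectedComponentIn isClosed_singleton.isOpen_compl hm with
    hxy' | ⟨α, hα, hαU⟩
  · exact absurd hxy' hxy
  obtain ⟨a, b, ha, hac, hcb, hb, B, hBα, hB, haB, hbB, J, hJ, hJimg⟩ :=
    (hg.isArc hxy).exists_isLoop_of_apply_notMem hα hc fun h => hαU h rfl
  have hd := dist_nonneg (x := x) (y := y)
  obtain ⟨v, hvB, hv_eq⟩ := hB.intermediate_value₂ haB hbB
    (f := fun w => dist x w) (g := fun w => dist y w) (by fun_prop) (by fun_prop)
    (by rw [hg.dist_source ⟨ha, by linarith⟩, hg.dist_target ⟨ha, by linarith⟩]; nlinarith)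
    (by rw [hg.dist_source ⟨by linarith, hb⟩, hg.dist_target ⟨by linarith, hb⟩]; nlinarith)
  have hvg : v ∉ g '' Icc 0 1 := by
    rintro ⟨t, ht, rfl⟩
    rw [hg.eq_half_of_dist_eq hxy ht hv_eq] at hvB
    exact hαU (hBα hvB) rfl
  exact ⟨v, hv_eq, hv.notMem_connectedComponentIn_of_isLoop (hg.isArc hxy) ha hac hcb hc hJ
    (hJimg ▸ subset_union_left) (hJimg ▸ Or.inr hvB) hvg⟩

lemma dist_le_two_mul_of_dist_eq {x y w : X} (h : dist x w = dist y w) :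
    dist x y ≤ 2 * dist x w := by
  linarith [dist_triangle_right x y w]

theorem IsVernationTree.exists_separating_pair (hv : IsVernationTree X) {x y : X} (hxy : x ≠ y) :
    ∃ u v : X, u ≠ x ∧ u ≠ y ∧ v ≠ x ∧ v ≠ y ∧
      y ∉ connectedComponentIn ({u, v} : Set X)ᶜ x ∧
      dist x y ≤ 2 * min (min (dist x u) (dist x v)) (min (dist y u) (dist y v)) := by
  obtain ⟨g, hg⟩ := hv.1.exists_isGeodesicSegment x y
  obtain ⟨v, hv_eq, hsep⟩ := hv.exists_dist_eq_notMem_connectedComponentIn hg hxy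
  have hm_eq : dist x (g (1 / 2)) = dist y (g (1 / 2)) := by
    rw [hg.dist_midpoint.1, hg.dist_midpoint.2]
  have hpos := dist_pos.mpr hxy
  have equidistant : ∀ w, dist x w = dist y w →
      w ≠ x ∧ w ≠ y ∧ dist x y ≤ 2 * dist x w ∧ dist x y ≤ 2 * dist y w := by
    intro w hw
    have h := dist_le_two_mul_of_dist_eq hw
    have hxw : 0 < dist x w := by linarith
    refine ⟨fun hwx => ?_, fun hwy => ?_, h, hw ▸ h⟩
    · rw [hwx, dist_self] at hxw
      exact hxw.false
    · rw [hw, hwy, dist_self] at hxw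
      exact hxw.false
  obtain ⟨hux, huy, hu₁, hu₂⟩ := equidistant _ hm_eq
  obtain ⟨hvx, hvy, hv₁, hv₂⟩ := equidistant _ hv_eq
  refine ⟨g (1 / 2), v, hux, huy, hvx, hvy, hsep, ?_⟩
  simp only [mul_min_of_nonneg _ _ (zero_le_two : (0 : ℝ) ≤ 2)]
  exact le_min (le_min hu₁ hv₁) (le_min hu₂ hv₂)

end VernationToSeparation

section SeparationToVernation

variable {X : Type*}

lemma mem_connectedComponentIn_compl_pair_of_theta [TopologicalSpace X] {P Q S : Set X}
    {p q u v : X} (hP : IsPreconnected P) (hQ : IsPreconnected Q) (hS : IsPreconnected S)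
    (hp : p ∈ P ∩ Q ∩ S) (hq : q ∈ P ∩ Q ∩ S)
    (hPQ : P ∩ Q ⊆ {p, q}) (hPS : P ∩ S ⊆ {p, q}) (hQS : Q ∩ S ⊆ {p, q})
    (hu : u ∉ ({p, q} : Set X)) (hv : v ∉ ({p, q} : Set X)) :
    q ∈ connectedComponentIn ({u, v} : Set X)ᶜ p := by
  have avoid : ∀ T : Set X, IsPreconnected T → p ∈ T → q ∈ T → u ∉ T → v ∉ T →
      q ∈ connectedComponentIn ({u, v} : Set X)ᶜ p := fun T hT hpT hqT huT hvT =>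
    hT.subset_connectedComponentIn hpT
      (fun w hw => by rintro (rfl | rfl); exacts [huT hw, hvT hw]) hqT
  have hu' : ¬(u ∈ P ∧ u ∈ Q) ∧ ¬(u ∈ P ∧ u ∈ S) ∧ ¬(u ∈ Q ∧ u ∈ S) :=
    ⟨fun h => hu (hPQ h), fun h => hu (hPS h), fun h => hu (hQS h)⟩
  have hv' : ¬(v ∈ P ∧ v ∈ Q) ∧ ¬(v ∈ P ∧ v ∈ S) ∧ ¬(v ∈ Q ∧ v ∈ S) :=
    ⟨fun h => hv (hPQ h), fun h => hv (hPS h), fun h => hv (hQS h)⟩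
  have : (u ∉ P ∧ v ∉ P) ∨ (u ∉ Q ∧ v ∉ Q) ∨ (u ∉ S ∧ v ∉ S) := by tauto
  rcases this with ⟨huT, hvT⟩ | ⟨huT, hvT⟩ | ⟨huT, hvT⟩
  · exact avoid P hP hp.1.1 hq.1.1 huT hvT
  · exact avoid Q hQ hp.1.2 hq.1.2 huT hvT
  · exact avoid S hS hp.2 hq.2 huT hvT

variable [MetricSpace X] {γ γ₁ γ₂ : ℝ → X} {x : X}

lemma IsLoop.mem_image (hγ : IsLoop γ x) : x ∈ γ '' Icc 0 1 :=
  ⟨0, left_mem_Icc.mpr zero_le_one, hγ.2.2.1⟩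

lemma IsLoop.eq_of_apply_eq (hγ : IsLoop γ x) {s t : ℝ} (hs : s ∈ Ico (0 : ℝ) 1)
    (ht : t ∈ Icc (0 : ℝ) 1) (h : γ t = γ s) : t = s ∨ (t = 1 ∧ s = 0) := by
  rcases ht.2.eq_or_lt with rfl | ht1
  · exact Or.inr ⟨rfl, hγ.2.1 hs (left_mem_Ico.mpr zero_lt_one)
      (h.symm.trans (hγ.2.2.2.trans hγ.2.2.1.symm))⟩
  · exact Or.inl (hγ.2.1 ⟨ht.1, ht1⟩ hs h)

lemma IsLoop.image_Ico (hγ : IsLoop γ x) : γ '' Ico 0 1 = γ '' Icc 0 1 := by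
  refine (image_mono Ico_subset_Icc_self).antisymm ?_
  rintro _ ⟨t, ht, rfl⟩
  rcases ht.2.eq_or_lt with rfl | ht1
  · exact ⟨0, left_mem_Ico.mpr zero_lt_one, hγ.2.2.1.trans hγ.2.2.2.symm⟩
  · exact ⟨t, ⟨ht.1, ht1⟩, rfl⟩

lemma IsLoop.isPreconnected_image (hγ : IsLoop γ x) {c d : ℝ} (hc : 0 ≤ c) (hd : d ≤ 1) :
    IsPreconnected (γ '' Icc c d) :=
  isPreconnected_Icc.image γ (hγ.1.mono (Icc_subset_Icc hc hd))

lemma IsLoop.exists_split_of_le (hγ : IsLoop γ x) {s t : ℝ} (hs : s ∈ Ico (0 : ℝ) 1)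
    (ht : t ∈ Ico (0 : ℝ) 1) (hst : s ≤ t) :
    ∃ P Q, IsPreconnected P ∧ IsPreconnected Q ∧ γ s ∈ P ∩ Q ∧ γ t ∈ P ∩ Q ∧
      P ∪ Q ⊆ γ '' Icc 0 1 ∧ P ∩ Q ⊆ {γ s, γ t} := by
  refine ⟨γ '' Icc s t, γ '' Icc t 1 ∪ γ '' Icc 0 s, hγ.isPreconnected_image hs.1 ht.2.le,
    (hγ.isPreconnected_image ht.1 le_rfl).union x ⟨1, ⟨ht.2.le, le_rfl⟩, hγ.2.2.2⟩
      ⟨0, ⟨le_rfl, hs.1⟩, hγ.2.2.1⟩ (hγ.isPreconnected_image le_rfl hs.2.le),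
    ⟨⟨s, ⟨le_rfl, hst⟩, rfl⟩, Or.inr ⟨s, ⟨hs.1, le_rfl⟩, rfl⟩⟩,
    ⟨⟨t, ⟨hst, le_rfl⟩, rfl⟩, Or.inl ⟨t, ⟨le_rfl, ht.2.le⟩, rfl⟩⟩,
    union_subset (image_mono (Icc_subset_Icc hs.1 ht.2.le)) (union_subset
      (image_mono (Icc_subset_Icc ht.1 le_rfl)) (image_mono (Icc_subset_Icc le_rfl hs.2.le))), ?_⟩
  rintro _ ⟨⟨σ, hσ, rfl⟩, ⟨τ, hτ, hτσ⟩ | ⟨τ, hτ, hτσ⟩⟩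
  · have hσ' : σ ∈ Ico (0 : ℝ) 1 := ⟨hs.1.trans hσ.1, hσ.2.trans_lt ht.2⟩
    rcases hγ.eq_of_apply_eq hσ' ⟨ht.1.trans hτ.1, hτ.2⟩ hτσ with rfl | ⟨-, rfl⟩
    · exact Or.inr (congrArg γ (le_antisymm hσ.2 hτ.1))
    · exact Or.inl (congrArg γ (le_antisymm hs.1 hσ.1))
  · have hτσ' := hγ.2.1 ⟨hτ.1, hτ.2.trans_lt hs.2⟩ ⟨hs.1.trans hσ.1, hσ.2.trans_lt ht.2⟩ hτσ
    exact Or.inl (by rw [← hτσ', le_antisymm hτ.2 (hτσ' ▸ hσ.1)])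

lemma IsLoop.exists_split (hγ : IsLoop γ x) {p q : X} (hp : p ∈ γ '' Icc 0 1)
    (hq : q ∈ γ '' Icc 0 1) :
    ∃ P Q, IsPreconnected P ∧ IsPreconnected Q ∧ p ∈ P ∩ Q ∧ q ∈ P ∩ Q ∧
      P ∪ Q ⊆ γ '' Icc 0 1 ∧ P ∩ Q ⊆ {p, q} := by
  rw [← hγ.image_Ico] at hp hq
  obtain ⟨s, hs, rfl⟩ := hp
  obtain ⟨t, ht, rfl⟩ := hq
  rcases le_total s t with hst | hts
  · exact hγ.exists_split_of_le hs ht hst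
  · obtain ⟨P, Q, hP, hQ, htPQ, hsPQ, hγPQ, hPQ⟩ := hγ.exists_split_of_le ht hs hts
    exact ⟨P, Q, hP, hQ, hsPQ, htPQ, hγPQ, pair_comm (γ t) (γ s) ▸ hPQ⟩

/-- An excursion of `γ₂` away from the image of `γ₁` is a chord of `γ₁`; the common point
`p ≠ x` keeps its endpoints apart. -/
lemma IsLoop.exists_chord (h₁ : IsLoop γ₁ x) (h₂ : IsLoop γ₂ x) {p z : X}
    (hp₁ : p ∈ γ₁ '' Icc 0 1) (hp₂ : p ∈ γ₂ '' Icc 0 1) (hpx : p ≠ x)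
    (hz₂ : z ∈ γ₂ '' Icc 0 1) (hz₁ : z ∉ γ₁ '' Icc 0 1) :
    ∃ q r S, q ≠ r ∧ q ∈ γ₁ '' Icc 0 1 ∧ r ∈ γ₁ '' Icc 0 1 ∧
      IsPreconnected S ∧ q ∈ S ∧ r ∈ S ∧ S ∩ γ₁ '' Icc 0 1 ⊆ {q, r} := by
  obtain ⟨s₀, hs₀, rfl⟩ := hz₂
  obtain ⟨t₀, ht₀, rfl⟩ := hp₂
  obtain ⟨a, b, ha, has, hsb, hb, haC, hbC, hout⟩ :=
    exists_excursion h₂.1 (isCompact_Icc.image_of_continuousOn h₁.1).isClosed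
      (h₂.2.2.1 ▸ h₁.mem_image) (h₂.2.2.2 ▸ h₁.mem_image) hs₀ hz₁
  refine ⟨γ₂ a, γ₂ b, γ₂ '' Icc a b, fun hab => ?_, haC, hbC, h₂.isPreconnected_image ha hb,
    ⟨a, ⟨le_rfl, (has.trans hsb).le⟩, rfl⟩, ⟨b, ⟨(has.trans hsb).le, le_rfl⟩, rfl⟩, ?_⟩
  · rcases h₂.eq_of_apply_eq ⟨ha, has.trans_le hs₀.2⟩ ⟨hs₀.1.trans hsb.le, hb⟩ hab.symm with
      hba | ⟨rfl, rfl⟩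
    · linarith
    · refine hout t₀ ⟨ht₀.1.lt_of_ne ?_, ht₀.2.lt_of_ne ?_⟩ hp₁ <;> rintro rfl
      exacts [hpx h₂.2.2.1, hpx h₂.2.2.2]
  · rintro _ ⟨⟨t, ht, rfl⟩, htC⟩
    rcases ht.1.eq_or_lt with rfl | hat
    · exact Or.inl rfl
    rcases ht.2.eq_or_lt with rfl | htb
    · exact Or.inr rfl
    exact absurd htC (hout t ⟨hat, htb⟩)

variable (X) in
def HasSeparatingPairs : Prop :=
  ∀ x y : X, x ≠ y → ∃ u v : X, u ≠ x ∧ u ≠ y ∧ v ≠ x ∧ v ≠ y ∧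
    y ∉ connectedComponentIn ({u, v} : Set X)ᶜ x

lemma HasSeparatingPairs.image_subset_of_isLoop (hsep : HasSeparatingPairs X)
    (h₁ : IsLoop γ₁ x) (h₂ : IsLoop γ₂ x) {p : X} (hp₁ : p ∈ γ₁ '' Icc 0 1)
    (hp₂ : p ∈ γ₂ '' Icc 0 1) (hpx : p ≠ x) : γ₂ '' Icc 0 1 ⊆ γ₁ '' Icc 0 1 := by
  intro z hz₂
  by_contra hz₁
  obtain ⟨q, r, S, hqr, hq, hr, hS, hqS, hrS, hSγ⟩ := h₁.exists_chord h₂ hp₁ hp₂ hpx hz₂ hz₁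
  obtain ⟨P, Q, hP, hQ, hqPQ, hrPQ, hPQγ, hPQ⟩ := h₁.exists_split hq hr
  obtain ⟨u, v, huq, hur, hvq, hvr, huv⟩ := hsep q r hqr
  exact huv (mem_connectedComponentIn_compl_pair_of_theta hP hQ hS ⟨hqPQ, hqS⟩ ⟨hrPQ, hrS⟩ hPQ
    (fun w hw => hSγ ⟨hw.2, hPQγ (Or.inl hw.1)⟩) (fun w hw => hSγ ⟨hw.2, hPQγ (Or.inr hw.1)⟩)
    (by simp [huq, hur]) (by simp [hvq, hvr]))

theorem IsGeodesicSpace.isVernationTree_of_hasSeparatingPairs (hgeo : IsGeodesicSpace X)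
    (hsep : HasSeparatingPairs X) : IsVernationTree X := by
  refine ⟨hgeo, fun x γ₁ γ₂ h₁ h₂ => or_iff_not_imp_right.mpr fun hint => ?_⟩
  obtain ⟨p, ⟨hp₁, hp₂⟩, hpx⟩ : ∃ p ∈ γ₁ '' Icc 0 1 ∩ γ₂ '' Icc 0 1, p ≠ x := by
    by_contra! h
    exact hint (eq_singleton_iff_unique_mem.mpr ⟨⟨h₁.mem_image, h₂.mem_image⟩, h⟩)
  exact (hsep.image_subset_of_isLoop h₂ h₁ hp₂ hp₁ hpx).antisymm
    (hsep.image_subset_of_isLoop h₁ h₂ hp₁ hp₂ hpx)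

end SeparationToVernation

theorem statement18_general (X : Type*) [MetricSpace X]
    (hgeo : IsGeodesicSpace X) :
    (IsVernationTree X ↔
      ∀ x y : X, x ≠ y → ∃ u v : X, u ≠ x ∧ u ≠ y ∧ v ≠ x ∧ v ≠ y ∧
        y ∉ connectedComponentIn ({u, v} : Set X)ᶜ x) ∧
    (IsVernationTree X ↔
      ∀ x y : X, x ≠ y → ∃ u v : X, u ≠ x ∧ u ≠ y ∧ v ≠ x ∧ v ≠ y ∧
        y ∉ connectedComponentIn ({u, v} : Set X)ᶜ x ∧
        dist x y ≤ 2 * min (min (dist x u) (dist x v)) (min (dist y u) (dist y v))) := by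
  have hasSeparatingPairs_of_dist (h : ∀ x y : X, x ≠ y → ∃ u v : X, u ≠ x ∧ u ≠ y ∧ v ≠ x ∧ v ≠ y ∧
      y ∉ connectedComponentIn ({u, v} : Set X)ᶜ x ∧
      dist x y ≤ 2 * min (min (dist x u) (dist x v)) (min (dist y u) (dist y v))) :
      HasSeparatingPairs X := fun x y hxy =>
    let ⟨u, v, hux, huy, hvx, hvy, hsep, _⟩ := h x y hxy
    ⟨u, v, hux, huy, hvx, hvy, hsep⟩
  exact ⟨⟨fun hv => hasSeparatingPairs_of_dist fun _ _ => hv.exists_separating_pair,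
      hgeo.isVernationTree_of_hasSeparatingPairs⟩,
    ⟨fun hv _ _ => hv.exists_separating_pair,
      fun h => hgeo.isVernationTree_of_hasSeparatingPairs (hasSeparatingPairs_of_dist h)⟩⟩

theorem statement18 (X : Type*) [MetricSpace X] [CompactSpace X]
    (hgeo : IsGeodesicSpace X) :
    (IsVernationTree X ↔
      ∀ x y : X, x ≠ y → ∃ u v : X, u ≠ x ∧ u ≠ y ∧ v ≠ x ∧ v ≠ y ∧
        y ∉ connectedComponentIn ({u, v} : Set X)ᶜ x) ∧
    (IsVernationTree X ↔
      ∀ x y : X, x ≠ y → ∃ u v : X, u ≠ x ∧ u ≠ y ∧ v ≠ x ∧ v ≠ y ∧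
        y ∉ connectedComponentIn ({u, v} : Set X)ᶜ x ∧
        dist x y ≤ 2 * min (min (dist x u) (dist x v)) (min (dist y u) (dist y v))) :=
  statement18_general X hgeo
end
end
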